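/- arXiv:2112.01169 — 14 statements merged into one kernel-verified Lean document; each statement's English description precedes it below -/
import Mathlib

section
/- Let G be a connected finite simple undirected graph and S ⊆ V with |S| ≥ 2. If every vertex v ∉ S satisfies N_S(v) = ∅ or N_S(v) = S, then S is a critical set of G. -/
open Matrix
open scoped Classical

/-- `S` is a critical set of `G`: `S` is nonempty and there is a nonzero eigenvector of the
Laplacian of `G` vanishing outside `S`. -/
def IsCriticalSet {V : Type*} [Fintype V] [DecidableEq V] (G : SimpleGraph V) (S : Set V) :
    Prop :=
  S.Nonempty ∧ ∃ (lam : ℝ) (y : V → ℝ), y ≠ 0 ∧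
    G.lapMatrix ℝ *ᵥ y = lam • y ∧ ∀ v ∉ S, y v = 0

/-- `S` is a perfect critical set of `G`: some inducing eigenvector vanishes outside `S` and is
nonzero at every vertex of `S`. -/
def IsPerfectCriticalSet {V : Type*} [Fintype V] [DecidableEq V] (G : SimpleGraph V)
    (S : Set V) : Prop :=
  S.Nonempty ∧ ∃ (lam : ℝ) (y : V → ℝ), y ≠ 0 ∧
    G.lapMatrix ℝ *ᵥ y = lam • y ∧ (∀ v ∉ S, y v = 0) ∧ ∀ v ∈ S, y v ≠ 0

/-- `S` is a minimal perfect critical set of `G`: a perfect critical set none of whose proper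
subsets is a perfect critical set. -/
def IsMinimalPerfectCriticalSet {V : Type*} [Fintype V] [DecidableEq V] (G : SimpleGraph V)
    (S : Set V) : Prop :=
  IsPerfectCriticalSet G S ∧ ∀ T : Set V, T ⊂ S → ¬ IsPerfectCriticalSet G T

/-!
Let `W` be the space of vectors supported on `S` whose entries sum to zero; it is nonzero as soon
as `|S| ≥ 2`. The Laplacian maps `W` into itself: every column of `L` sums to zero, and at a
vertex `v ∉ S` we get `(L y)_v = -∑_{u ∈ N_S(v)} y_u`, a sum over either no vertex of `S` or all
of them. A symmetric operator restricted to a nonzero invariant subspace is still symmetric, so it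
has an eigenvector there, and that eigenvector induces `S`.
-/

theorem LinearMap.IsSymmetric.exists_eigenvector_mem_of_invariant {𝕜 E : Type*} [RCLike 𝕜]
    [NormedAddCommGroup E] [InnerProductSpace 𝕜 E] [FiniteDimensional 𝕜 E]
    {T : E →ₗ[𝕜] E} (hT : T.IsSymmetric) {W : Submodule 𝕜 E} (hW : ∀ x ∈ W, T x ∈ W)
    (hW₀ : W ≠ ⊥) : ∃ μ : 𝕜, ∃ x ∈ W, x ≠ 0 ∧ T x = μ • x := by
  have : Nontrivial W := Submodule.nontrivial_iff_ne_bot.mpr hW₀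
  obtain ⟨w, hw⟩ :=
    (hT.restrict_invariant hW).hasEigenvalue_iSup_of_finiteDimensional.exists_hasEigenvector
  exact ⟨_, w, w.2, by simpa using hw.2, congrArg Subtype.val hw.apply_eq_smul⟩

theorem Matrix.IsHermitian.exists_eigenvector_mem_of_mulVec_mem {𝕜 n : Type*} [RCLike 𝕜]
    [Fintype n] [DecidableEq n] {A : Matrix n n 𝕜} (hA : A.IsHermitian)
    {W : Submodule 𝕜 (n → 𝕜)} (hW : ∀ y ∈ W, A *ᵥ y ∈ W) (hW₀ : W ≠ ⊥) :
    ∃ μ : 𝕜, ∃ y ∈ W, y ≠ 0 ∧ A *ᵥ y = μ • y := by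
  let W' : Submodule 𝕜 (EuclideanSpace 𝕜 n) :=
    W.comap (WithLp.linearEquiv 2 𝕜 (n → 𝕜)).toLinearMap
  obtain ⟨μ, x, hxW, hx₀, hAx⟩ :=
    (Matrix.isSymmetric_toEuclideanLin_iff.mpr hA).exists_eigenvector_mem_of_invariant
      (W := W') (fun x hx => hW _ hx)
      (by simpa [W', Submodule.comap_equiv_eq_map_symm] using hW₀)
  exact ⟨μ, x.ofLp, hxW, by simpa using hx₀, by simpa using congrArg WithLp.ofLp hAx⟩

def supportedSumZero (R : Type*) {V : Type*} [Fintype V] [CommSemiring R] (S : Set V) :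
    Submodule R (V → R) where
  carrier := {y | (∀ v ∉ S, y v = 0) ∧ ∑ v, y v = 0}
  add_mem' := by
    rintro a b ⟨ha, ha'⟩ ⟨hb, hb'⟩
    exact ⟨fun v hv => by simp [ha v hv, hb v hv], by simp [Finset.sum_add_distrib, ha', hb']⟩
  zero_mem' := by simp
  smul_mem' := by
    rintro c a ⟨ha, ha'⟩
    exact ⟨fun v hv => by simp [ha v hv], by simp [← Finset.mul_sum, ha']⟩

theorem supportedSumZero_ne_bot {R V : Type*} [Fintype V] [DecidableEq V] [CommRing R]
    [Nontrivial R]    {S : Set V} (hS : 1 < S.ncard) :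
    supportedSumZero R S ≠ ⊥ := by
  obtain ⟨a, ha, b, hb, hab⟩ := (Set.one_lt_ncard S.toFinite).mp hS
  refine (Submodule.ne_bot_iff _).mpr
    ⟨Pi.single a 1 - Pi.single b 1, ⟨fun v hv => ?_, ?_⟩, ?_⟩
  · have hva : v ≠ a := by rintro rfl; exact hv ha
    have hvb : v ≠ b := by rintro rfl; exact hv hb
    simp [hva, hvb]
  · simp [Finset.sum_sub_distrib]
  · intro h
    simpa [hab] using congrFun h a

theorem SimpleGraph.sum_lapMatrix_mulVec {R V : Type*} [Fintype V] [DecidableEq V] [CommRing R]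
    (G : SimpleGraph V) [DecidableRel G.Adj] (y : V → R) :
    ∑ v, (G.lapMatrix R *ᵥ y) v = 0 := by
  rw [← one_dotProduct, dotProduct_mulVec, ← mulVec_transpose, (G.isSymm_lapMatrix (R := R)).eq,
    Pi.one_def, lapMatrix_mulVec_const_eq_zero, zero_dotProduct]

theorem SimpleGraph.lapMatrix_mulVec_mem_supportedSumZero {R V : Type*} [Fintype V]
    [DecidableEq V] [CommRing R] (G : SimpleGraph V) [DecidableRel G.Adj] {S : Set V}
    (hS : ∀ v ∉ S, (∀ u ∈ S, ¬ G.Adj v u) ∨ (∀ u ∈ S, G.Adj v u)) {y : V → R}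
    (hy : y ∈ supportedSumZero R S) : G.lapMatrix R *ᵥ y ∈ supportedSumZero R S := by
  obtain ⟨hy_supp, hy_sum⟩ := hy
  refine ⟨fun v hv => ?_, G.sum_lapMatrix_mulVec y⟩
  rw [lapMatrix_mulVec_apply, hy_supp v hv, mul_zero, zero_sub, neg_eq_zero]
  rcases hS v hv with h_none | h_all
  · exact Finset.sum_eq_zero fun u hu =>
      hy_supp u fun huS => h_none u huS ((G.mem_neighborFinset v u).mp hu)
  · rw [Finset.sum_subset (Finset.subset_univ _) fun u _ hu =>
      hy_supp u fun huS => hu ((G.mem_neighborFinset v u).mpr (h_all u huS))]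
    exact hy_sum

theorem critical_of_all_or_nothing_neighbors_general {V : Type*} [Fintype V] [DecidableEq V]
    (G : SimpleGraph V) (S : Set V) (hS : 2 ≤ S.ncard)
    (h : ∀ v ∉ S, (∀ u ∈ S, ¬ G.Adj v u) ∨ (∀ u ∈ S, G.Adj v u)) :
    IsCriticalSet G S := by
  obtain ⟨μ, y, hyW, hy₀, hLy⟩ :=
    (G.isHermitian_lapMatrix ℝ).exists_eigenvector_mem_of_mulVec_mem
      (fun _ hy => G.lapMatrix_mulVec_mem_supportedSumZero h hy) (supportedSumZero_ne_bot hS)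
  exact ⟨Set.nonempty_of_ncard_ne_zero (by omega), μ, y, hy₀, hLy, hyW.1⟩

/-- Proposition 3: if every vertex outside `S` is adjacent either to no vertex of `S` or to
every vertex of `S`, and `|S| ≥ 2`, then `S` is a critical set of the connected graph `G`. -/
theorem critical_of_all_or_nothing_neighbors {V : Type*} [Fintype V] [DecidableEq V]
    (G : SimpleGraph V) (hG : G.Connected) (S : Set V) (hS : 2 ≤ S.ncard)
    (h : ∀ v ∉ S, (∀ u ∈ S, ¬ G.Adj v u) ∨ (∀ u ∈ S, G.Adj v u)) :
    IsCriticalSet G S :=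
  critical_of_all_or_nothing_neighbors_general G S hS h
end

section
/- Let G be a connected finite simple undirected graph with at least two vertices and let S be a perfect critical set of G with |S| = k. Then for every vertex v ∉ S, |N_S(v)| ≠ 1 and |N_S(v)| ≠ k − 1. -/
open Matrix
open scoped Classical

/-! An eigenvector `y` of the Laplacian that vanishes at a vertex `v` sums to zero over the
neighbours of `v`, since `(L y)_v = deg v · y_v - ∑_{u ~ v} y_u`. If moreover `G` is connected and
`y` vanishes somewhere, the eigenvalue is nonzero (the kernel consists of constant vectors), so `y`
is orthogonal to the all-ones kernel vector and sums to zero over `V`. For a perfect critical set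
`S` and `v ∉ S`, both `N_S(v)` and `S \ N_S(v)` are therefore sets on which `y` is nowhere zero but
sums to zero, so neither can be a singleton. -/

namespace Finset

variable {ι M : Type*} {s t : Finset ι} {f : ι → M}

theorem card_ne_one_of_sum_eq_zero [AddCommMonoid M] (hf : ∀ i ∈ s, f i ≠ 0)
    (hs : ∑ i ∈ s, f i = 0) : s.card ≠ 1 := by
  intro h
  obtain ⟨a, rfl⟩ := card_eq_one.mp h
  exact hf a (mem_singleton_self a) (by simpa using hs)

theorem card_ne_card_sub_one_of_sum_eq_zero [AddCommGroup M] [DecidableEq ι] (hts : t ⊆ s)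
    (hne : s.Nonempty) (hf : ∀ i ∈ s, f i ≠ 0) (hs : ∑ i ∈ s, f i = 0) (ht : ∑ i ∈ t, f i = 0) :
    t.card ≠ s.card - 1 := by
  intro h
  have hsdiff : ∑ i ∈ s \ t, f i = 0 := by rw [sum_sdiff_eq_sub hts, hs, ht, sub_zero]
  refine card_ne_one_of_sum_eq_zero (fun i hi => hf i (mem_sdiff.mp hi).1) hsdiff ?_
  have := hne.card_pos
  rw [card_sdiff_of_subset hts]
  omega

end Finset

namespace SimpleGraph

variable {V R : Type*} [Fintype V] [DecidableEq V] (G : SimpleGraph V) [DecidableRel G.Adj]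

theorem sum_lapMatrix_mulVec_s2 [CommRing R] (x : V → R) : ∑ i, (G.lapMatrix R *ᵥ x) i = 0 := by
  rw [← one_dotProduct, dotProduct_mulVec, ← mulVec_transpose, (G.isSymm_lapMatrix R).eq,
    Pi.one_def, lapMatrix_mulVec_const_eq_zero, zero_dotProduct]

variable {G}

theorem sum_eq_zero_of_lapMatrix_mulVec_eq_smul [CommRing R] [NoZeroDivisors R] {lam : R}
    {x : V → R} (hlam : lam ≠ 0) (heig : G.lapMatrix R *ᵥ x = lam • x) : ∑ i, x i = 0 := by
  have h := G.sum_lapMatrix_mulVec_s2 x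
  simp only [heig, Pi.smul_apply, smul_eq_mul, ← Finset.mul_sum, mul_eq_zero] at h
  exact h.resolve_left hlam

theorem sum_neighborFinset_eq_zero_of_lapMatrix_mulVec_eq_smul [CommRing R] {lam : R}
    {x : V → R} {v : V} (heig : G.lapMatrix R *ᵥ x = lam • x) (hv : x v = 0) :
    ∑ u ∈ G.neighborFinset v, x u = 0 := by
  have h := congrFun heig v
  rwa [lapMatrix_mulVec_apply, Pi.smul_apply, smul_eq_mul, hv, mul_zero, mul_zero, zero_sub,
    neg_eq_zero] at h

theorem Connected.lapMatrix_eigenvalue_ne_zero (hG : G.Connected) {lam : ℝ} {x : V → ℝ}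
    {v : V} (heig : G.lapMatrix ℝ *ᵥ x = lam • x) (hx : x ≠ 0) (hv : x v = 0) : lam ≠ 0 := by
  rintro rfl
  rw [zero_smul, lapMatrix_mulVec_eq_zero_iff_forall_reachable] at heig
  exact hx (funext fun u => (heig u v (hG.preconnected u v)).trans hv)

end SimpleGraph

theorem pcs_neighbor_count_ne_one_and_ne_pred_general {V : Type*} [Fintype V] [DecidableEq V]
    (G : SimpleGraph V) (hG : G.Connected)
    (S : Set V) (k : ℕ) (hk : S.ncard = k) (hS : IsPerfectCriticalSet G S) :
    ∀ v ∉ S, {u ∈ S | G.Adj v u}.ncard ≠ 1 ∧ {u ∈ S | G.Adj v u}.ncard ≠ k - 1 := by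
  obtain ⟨hSne, lam, y, hy, heig, hvan, hnz⟩ := hS
  intro v hv
  have hlam : lam ≠ 0 := hG.lapMatrix_eigenvalue_ne_zero heig hy (hvan v hv)
  have hnzS : ∀ u ∈ S.toFinset, y u ≠ 0 := fun u hu => hnz u (Set.mem_toFinset.mp hu)
  have hNS : {u ∈ S | G.Adj v u}.toFinset ⊆ S.toFinset :=
    Set.toFinset_subset_toFinset.mpr (Set.sep_subset _ _)
  have hsumS : ∑ u ∈ S.toFinset, y u = 0 := by
    rw [Finset.sum_subset (Finset.subset_univ _) fun u _ hu => hvan u (by simpa using hu)]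
    exact SimpleGraph.sum_eq_zero_of_lapMatrix_mulVec_eq_smul hlam heig
  have hsumN : ∑ u ∈ {u ∈ S | G.Adj v u}.toFinset, y u = 0 := by
    rw [Finset.sum_subset (s₂ := G.neighborFinset v)
      (fun u hu => by simpa using (Set.mem_toFinset.mp hu).2)
      fun u hu huN => hvan u fun huS => huN (by simpa [huS] using hu)]
    exact SimpleGraph.sum_neighborFinset_eq_zero_of_lapMatrix_mulVec_eq_smul heig (hvan v hv)
  rw [← hk, Set.ncard_eq_toFinset_card', Set.ncard_eq_toFinset_card']
  exact ⟨Finset.card_ne_one_of_sum_eq_zero (fun u hu => hnzS u (hNS hu)) hsumN,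
    Finset.card_ne_card_sub_one_of_sum_eq_zero hNS (by simpa using hSne) hnzS hsumS hsumN⟩

/-- Lemma 1: if `S` is a perfect critical set with `|S| = k`, then no vertex outside `S` has
exactly `1` or exactly `k - 1` neighbors in `S`. -/
theorem pcs_neighbor_count_ne_one_and_ne_pred {V : Type*} [Fintype V] [DecidableEq V]
    (G : SimpleGraph V) (hG : G.Connected) (hcard : 2 ≤ Fintype.card V)
    (S : Set V) (k : ℕ) (hk : S.ncard = k) (hS : IsPerfectCriticalSet G S) :
    ∀ v ∉ S, {u ∈ S | G.Adj v u}.ncard ≠ 1 ∧ {u ∈ S | G.Adj v u}.ncard ≠ k - 1 :=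
  pcs_neighbor_count_ne_one_and_ne_pred_general G hG S k hk hS
end

section
/- Let G be a connected finite simple undirected graph with at least two vertices and S ⊆ V with |S| = 2. Then S is a minimal perfect critical set of G if and only if every vertex v ∉ S satisfies N_S(v) = ∅ or N_S(v) = S. -/
open Matrix
open scoped Classical

lemma exists_adj_of_connected {V : Type*} [Fintype V] [DecidableEq V]
    (G : SimpleGraph V) (hG : G.Connected) (hcard : 2 ≤ Fintype.card V) (c : V) :
    ∃ w, G.Adj c w := by
  obtain ⟨d, hd⟩ := Fintype.exists_ne_of_one_lt_card (by omega) c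
  obtain ⟨p⟩ := hG.preconnected c d
  exact ⟨p.getVert 1, p.adj_snd (SimpleGraph.Walk.not_nil_of_ne hd.symm)⟩

lemma not_pcs_singleton {V : Type*} [Fintype V] [DecidableEq V]
    (G : SimpleGraph V) (hG : G.Connected) (hcard : 2 ≤ Fintype.card V) (c : V) :
    ¬ IsPerfectCriticalSet G {c} := by
  rintro ⟨-, lam, y, -, heig, hout, hin⟩
  obtain ⟨w, hw⟩ := exists_adj_of_connected G hG hcard c
  have hwc : w ≠ c := fun h => G.irrefl (h ▸ hw)
  have h1 : (G.lapMatrix ℝ *ᵥ y) w = lam * y w := by rw [heig]; rfl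
  rw [SimpleGraph.lapMatrix_mulVec_apply] at h1
  have hyw : y w = 0 := hout w (by simp [hwc])
  have hsum : ∑ u ∈ G.neighborFinset w, y u = y c := by
    apply Finset.sum_eq_single_of_mem
    · rw [SimpleGraph.mem_neighborFinset]; exact hw.symm
    · intro u _ hune; exact hout u (by simp [hune])
  rw [hyw, hsum] at h1
  have : y c = 0 := by linarith
  exact hin c rfl this

lemma sum_nbr {V : Type*} [Fintype V] [DecidableEq V] (G : SimpleGraph V)
    (a b : V) (hab : a ≠ b) (y : V → ℝ) (hy : ∀ v, v ≠ a → v ≠ b → y v = 0) (v : V) :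
    ∑ u ∈ G.neighborFinset v, y u =
      (if G.Adj v a then y a else 0) + (if G.Adj v b then y b else 0) := by
  have hcong : ∀ u ∈ G.neighborFinset v,
      y u = (if u = a then y a else 0) + (if u = b then y b else 0) := by
    intro u _
    by_cases h1 : u = a
    · subst h1; simp [hab]
    · by_cases h2 : u = b
      · subst h2; simp [h1]
      · simp [h1, h2, hy u h1 h2]
  rw [Finset.sum_congr rfl hcong, Finset.sum_add_distrib]
  simp [Finset.sum_ite_eq', SimpleGraph.mem_neighborFinset]

/-- Theorem 3: a two-element set `S` is a minimal perfect critical set if and only if every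
vertex outside `S` is adjacent either to no vertex of `S` or to every vertex of `S`. -/
theorem mpcs_card_two_iff {V : Type*} [Fintype V] [DecidableEq V]
    (G : SimpleGraph V) (hG : G.Connected) (hcard : 2 ≤ Fintype.card V)
    (S : Set V) (hS : S.ncard = 2) :
    IsMinimalPerfectCriticalSet G S ↔
      ∀ v ∉ S, (∀ u ∈ S, ¬ G.Adj v u) ∨ (∀ u ∈ S, G.Adj v u) := by
  obtain ⟨a, b, hab, rfl⟩ := Set.ncard_eq_two.mp hS
  have haS : a ∈ ({a, b} : Set V) := by simp
  have hbS : b ∈ ({a, b} : Set V) := by simp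
  constructor
  · rintro ⟨⟨-, lam, y, -, heig, hout, hin⟩, -⟩
    intro v hv
    have hva : v ≠ a := fun h => hv (h ▸ haS)
    have hvb : v ≠ b := fun h => hv (h ▸ hbS)
    have hy : ∀ u, u ≠ a → u ≠ b → y u = 0 := fun u h1 h2 => hout u (by simp [h1, h2])
    have h1 : (G.lapMatrix ℝ *ᵥ y) v = lam * y v := by rw [heig]; rfl
    rw [SimpleGraph.lapMatrix_mulVec_apply, sum_nbr G a b hab y hy v] at h1
    have hyv : y v = 0 := hout v hv
    rw [hyv] at h1
    have hsum0 : (if G.Adj v a then y a else 0) + (if G.Adj v b then y b else 0) = 0 := by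
      linarith
    by_cases hA : G.Adj v a <;> by_cases hB : G.Adj v b
    · right; rintro u (rfl | rfl)
      · exact hA
      · exact hB
    · exfalso
      rw [if_pos hA, if_neg hB] at hsum0
      exact hin a haS (by linarith)
    · exfalso
      rw [if_neg hA, if_pos hB] at hsum0
      exact hin b hbS (by linarith)
    · left; rintro u (rfl | rfl)
      · exact hA
      · exact hB
  · intro hnbr
    -- degrees of a and b agree
    have herase : (G.neighborFinset a).erase b = (G.neighborFinset b).erase a := by
      ext v
      simp only [Finset.mem_erase, SimpleGraph.mem_neighborFinset]
      constructor
      · rintro ⟨hvb, hva⟩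
        have hvna : v ≠ a := fun h => G.irrefl (h ▸ hva)
        have hvS : v ∉ ({a, b} : Set V) := by simp [hvna, hvb]
        rcases hnbr v hvS with h | h
        · exact absurd hva.symm (h a haS)
        · exact ⟨hvna, (h b hbS).symm⟩
      · rintro ⟨hva, hvb⟩
        have hvnb : v ≠ b := fun h => G.irrefl (h ▸ hvb)
        have hvS : v ∉ ({a, b} : Set V) := by simp [hva, hvnb]
        rcases hnbr v hvS with h | h
        · exact absurd hvb.symm (h b hbS)
        · exact ⟨hvnb, (h a haS).symm⟩
    have hdeg : G.degree a = G.degree b := by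
      by_cases hadj : G.Adj a b
      · have hb : b ∈ G.neighborFinset a := by rwa [SimpleGraph.mem_neighborFinset]
        have ha : a ∈ G.neighborFinset b := by
          rw [SimpleGraph.mem_neighborFinset]; exact hadj.symm
        rw [SimpleGraph.degree, SimpleGraph.degree, ← Finset.card_erase_add_one hb,
          ← Finset.card_erase_add_one ha, herase]
      · have hb : b ∉ G.neighborFinset a := by rwa [SimpleGraph.mem_neighborFinset]
        have ha : a ∉ G.neighborFinset b := by
          rw [SimpleGraph.mem_neighborFinset]; exact fun h => hadj h.symm
        rw [SimpleGraph.degree, SimpleGraph.degree, ← Finset.erase_eq_of_notMem hb,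
          ← Finset.erase_eq_of_notMem ha, herase]
    set y : V → ℝ := fun v => if v = a then 1 else if v = b then -1 else 0 with hydef
    have hya : y a = 1 := by simp [hydef]
    have hyb : y b = -1 := by simp [hydef, hab.symm]
    have hy0 : ∀ u, u ≠ a → u ≠ b → y u = 0 := by
      intro u h1 h2; simp [hydef, h1, h2]
    set lam : ℝ := G.degree a + (if G.Adj a b then 1 else 0) with hlam
    have heig : G.lapMatrix ℝ *ᵥ y = lam • y := by
      funext v
      rw [SimpleGraph.lapMatrix_mulVec_apply, sum_nbr G a b hab y hy0 v]
      show _ = lam * y v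
      by_cases h1 : v = a
      · subst h1
        rw [hya, hyb, if_neg (G.irrefl : ¬ G.Adj v v)]
        by_cases hadj : G.Adj v b <;> simp [hlam, hadj] <;> ring
      · by_cases h2 : v = b
        · subst h2
          rw [hya, hyb, if_neg (G.irrefl : ¬ G.Adj v v)]
          have hba : G.Adj v a ↔ G.Adj a v := ⟨fun h => h.symm, fun h => h.symm⟩
          by_cases hadj : G.Adj a v <;>
            simp [hlam, hba, hadj, hdeg] <;> ring
        · have hvS : v ∉ ({a, b} : Set V) := by simp [h1, h2]
          rw [hy0 v h1 h2]
          rcases hnbr v hvS with h | h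
          · rw [if_neg (h a haS), if_neg (h b hbS)]; ring
          · rw [if_pos (h a haS), if_pos (h b hbS), hya, hyb]; ring
    constructor
    · refine ⟨⟨a, haS⟩, lam, y, ?_, heig, ?_, ?_⟩
      · intro h
        have : y a = 0 := by rw [h]; rfl
        rw [hya] at this; norm_num at this
      · intro v hv
        simp only [Set.mem_insert_iff, Set.mem_singleton_iff] at hv
        push_neg at hv
        exact hy0 v hv.1 hv.2
      · rintro v (rfl | rfl)
        · rw [hya]; norm_num
        · rw [hyb]; norm_num
    · intro T hT hPCS
      have hTfin : T.Finite := Set.toFinite T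
      have hlt : T.ncard < 2 := hS ▸ Set.ncard_lt_ncard hT (Set.toFinite _)
      have hpos : 0 < T.ncard := (Set.ncard_pos (Set.toFinite T)).mpr hPCS.1
      have h1 : T.ncard = 1 := by omega
      obtain ⟨c, rfl⟩ := Set.ncard_eq_one.mp h1
      exact not_pcs_singleton G hG hcard c hPCS
end

section
/- Let G be a tree with at least two vertices and let S be a critical set of G. Then S contains at least two pendant vertices of G, i.e., at least two vertices v ∈ S with deg_G(v) = 1. -/
open Matrix
open scoped Classical

/-!
Root the tree at any vertex `r` and let `v` be a vertex of the support of the eigenvector `y`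
farthest from `r`. If `v` had a child `c`, then `y c = 0` and `v` would be the only neighbour
of `c` in the support (the other neighbours of `c` are its children, farther from `r` than `v`),
so the eigenvalue equation `deg c * y c - ∑_{u ∼ c} y u = λ * y c` at `c` would force `y v = 0`.
Hence `v` is a leaf different from `r`. Taking `r` arbitrary and then `r` equal to the leaf just
found gives two distinct leaves in the support, which lies inside `S`.
-/

namespace SimpleGraph

variable {V : Type*} {G : SimpleGraph V}

theorem Walk.dist_le_length_of_mem_support {u v x : V} (p : G.Walk u v) (hx : x ∈ p.support) :
    G.dist u x ≤ p.length := by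
  classical
  exact (dist_le _).trans (p.length_takeUntil_le_length hx)

theorem IsTree.mem_support_of_adj_of_dist_add_one_eq (hG : G.IsTree) {r a c : V}
    {p : G.Walk r c} (hp : p.IsPath) (hac : G.Adj a c) (hd : G.dist r a + 1 = G.dist r c) :
    a ∈ p.support := by
  obtain ⟨q, hq, hlen⟩ := hG.connected.exists_path_of_dist r a
  refine hG.isAcyclic.mem_support_of_ne_mem_support_of_adj_of_isPath hp hq hac.symm fun hc => ?_
  have := q.dist_le_length_of_mem_support hc
  omega

theorem IsTree.eq_of_adj_of_dist_add_one_eq (hG : G.IsTree) {r a b c : V} (hac : G.Adj a c)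
    (hbc : G.Adj b c) (ha : G.dist r a + 1 = G.dist r c) (hb : G.dist r b + 1 = G.dist r c) :
    a = b := by
  obtain ⟨p, hp, -⟩ := hG.connected.exists_path_of_dist r c
  rw [hG.isAcyclic.eq_penultimate_of_adj_end hp hac.symm
      (hG.mem_support_of_adj_of_dist_add_one_eq hp hac ha),
    hG.isAcyclic.eq_penultimate_of_adj_end hp hbc.symm
      (hG.mem_support_of_adj_of_dist_add_one_eq hp hbc hb)]

theorem IsTree.degree_eq_one_of_forall_adj_dist_le (hG : G.IsTree) {r v : V}
    [Fintype (G.neighborSet v)] (hvr : v ≠ r) (h : ∀ c, G.Adj v c → G.dist r c ≤ G.dist r v) :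
    G.degree v = 1 := by
  have parent (c : V) (hc : G.Adj v c) : G.dist r c + 1 = G.dist r v := by
    have := h c hc
    have := hG.dist_eq_dist_add_one_of_adj r hc
    omega
  obtain ⟨p, hp⟩ := (hG.connected v r).nonempty_neighborSet_left hvr
  exact degree_eq_one_iff_existsUnique_adj.mpr ⟨p, hp, fun c hc =>
    hG.eq_of_adj_of_dist_add_one_eq hc.symm hp.symm (parent c hc) (parent p hp)⟩

variable [Fintype V] [DecidableEq V] [DecidableRel G.Adj] {R : Type*} [NonAssocRing R]
  {lam : R} {y : V → R}

theorem eq_zero_of_lapMatrix_mulVec_eq_smul (hy : G.lapMatrix R *ᵥ y = lam • y) {c v : V}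
    (hc : y c = 0) (hcv : G.Adj c v) (hrest : ∀ u, G.Adj c u → u ≠ v → y u = 0) : y v = 0 := by
  have hsum : ∑ u ∈ G.neighborFinset c, y u = 0 := by
    have h := congrFun hy c
    rw [lapMatrix_mulVec_apply, Pi.smul_apply, hc, smul_zero, mul_zero, zero_sub,
      neg_eq_zero] at h
    exact h
  rwa [Finset.sum_eq_single_of_mem v ((G.mem_neighborFinset c v).mpr hcv)
    fun u hu => hrest u ((G.mem_neighborFinset c u).mp hu)] at hsum

theorem IsTree.dist_le_of_adj_of_lapMatrix_mulVec_eq_smul (hG : G.IsTree)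
    (hy : G.lapMatrix R *ᵥ y = lam • y) {r v : V} (hv : y v ≠ 0)
    (hmax : ∀ x, y x ≠ 0 → G.dist r x ≤ G.dist r v) {c : V} (hvc : G.Adj v c) :
    G.dist r c ≤ G.dist r v := by
  by_contra! hlt
  have hc : G.dist r c = G.dist r v + 1 := by
    have := hG.dist_eq_dist_add_one_of_adj r hvc
    omega
  refine hv (eq_zero_of_lapMatrix_mulVec_eq_smul hy ?_ hvc.symm fun u hcu huv => ?_)
  · by_contra hyc
    have := hmax c hyc
    omega
  · by_contra hyu
    have := hmax u hyu
    have := hG.dist_eq_dist_add_one_of_adj r hcu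
    exact huv (hG.eq_of_adj_of_dist_add_one_eq (r := r) hcu.symm hvc (by omega) (by omega))

theorem IsTree.exists_degree_eq_one_ne_of_lapMatrix_mulVec_eq_smul [Nontrivial V]
    (hG : G.IsTree) (hy0 : y ≠ 0) (hy : G.lapMatrix R *ᵥ y = lam • y) (r : V) :
    ∃ v, y v ≠ 0 ∧ G.degree v = 1 ∧ v ≠ r := by
  obtain ⟨v, hv, hmax⟩ := (Function.support y).exists_max_image (G.dist r) (Set.toFinite _)
    (Function.support_nonempty_iff.mpr hy0)
  have hlocal (c : V) (hc : G.Adj v c) : G.dist r c ≤ G.dist r v :=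
    hG.dist_le_of_adj_of_lapMatrix_mulVec_eq_smul hy hv hmax hc
  have hvr : v ≠ r := by
    rintro rfl
    obtain ⟨c, hc⟩ := hG.connected.preconnected.exists_adj_of_nontrivial v
    have := hlocal c hc
    rw [dist_self, dist_eq_one_iff_adj.mpr hc] at this
    omega
  exact ⟨v, hv, hG.degree_eq_one_of_forall_adj_dist_le hvr hlocal, hvr⟩

end SimpleGraph

/-- Proposition 4: a critical set of a tree with at least two vertices contains at least two
pendant vertices. -/
theorem critical_set_of_tree_contains_two_pendants {V : Type*} [Fintype V] [DecidableEq V]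
    (G : SimpleGraph V) (hG : G.IsTree) (hcard : 2 ≤ Fintype.card V)
    (S : Set V) (hS : IsCriticalSet G S) :
    ∃ u ∈ S, ∃ w ∈ S, u ≠ w ∧ G.degree u = 1 ∧ G.degree w = 1 := by
  obtain ⟨-, lam, y, hy0, hy, hout⟩ := hS
  have : Nontrivial V := Fintype.one_lt_card_iff_nontrivial.mp hcard
  have mem_S {v : V} (hv : y v ≠ 0) : v ∈ S := by_contra fun h => hv (hout v h)
  obtain ⟨u, hyu, hu, -⟩ :=
    hG.exists_degree_eq_one_ne_of_lapMatrix_mulVec_eq_smul hy0 hy (Classical.arbitrary V)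
  obtain ⟨w, hyw, hw, hwu⟩ := hG.exists_degree_eq_one_ne_of_lapMatrix_mulVec_eq_smul hy0 hy u
  exact ⟨u, mem_S hyu, w, mem_S hyw, hwu.symm, hu, hw⟩
end

section
/- Let G be a tree with at least two vertices, let S0 = {v ∈ V : deg_G(v) = 1} be its set of pendant vertices, and let F ⊆ V satisfy |F ∩ S0| ≤ 1. Then for every λ ∈ ℝ and every nonzero real vector y with L y = λ y, there exists a vertex v ∈ V∖F with y_v ≠ 0. (By the eigenvector criterion for controllability of Laplacian leader–follower dynamics, G is controllable under the leader set V∖F.) -/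
open Matrix
open scoped Classical

section Aux

open SimpleGraph
set_option linter.unusedSectionVars false

variable {V : Type*} [Fintype V] [DecidableEq V] {G : SimpleGraph V}

open scoped Classical

variable {V : Type*} [Fintype V] [DecidableEq V] {G : SimpleGraph V}

/-- In a tree, a vertex has at most one neighbor at distance ≤ its own distance from `r`. -/
lemma tree_parent_unique (hG : G.IsTree) {r u w₁ w₂ : V}
    (h1 : G.Adj u w₁) (h2 : G.Adj u w₂)
    (hd1 : G.dist r w₁ ≤ G.dist r u) (hd2 : G.dist r w₂ ≤ G.dist r u) : w₁ = w₂ := by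
  have key : ∀ w : V, G.Adj u w → G.dist r w ≤ G.dist r u →
      ∃ q : G.Walk r w, q.length = G.dist r w ∧ (u ∉ q.support) := by
    intro w hw hd
    obtain ⟨q, hq⟩ := (hG.isConnected.1 r w).exists_walk_length_eq_dist
    refine ⟨q, hq, fun hu => ?_⟩
    have hsplit : (q.takeUntil u hu).length + (q.dropUntil u hu).length = q.length := by
      have := SimpleGraph.Walk.take_spec q hu
      calc (q.takeUntil u hu).length + (q.dropUntil u hu).length
          = ((q.takeUntil u hu).append (q.dropUntil u hu)).length :=
            (SimpleGraph.Walk.length_append _ _).symm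
        _ = q.length := by rw [this]
    have h1' : G.dist r u ≤ (q.takeUntil u hu).length := SimpleGraph.dist_le _
    have h2' : (q.dropUntil u hu).length ≠ 0 := by
      intro h0
      exact hw.ne (SimpleGraph.Walk.eq_of_length_eq_zero h0)
    omega
  obtain ⟨q1, hq1, hu1⟩ := key w₁ h1 hd1
  obtain ⟨q2, hq2, hu2⟩ := key w₂ h2 hd2
  have hp1 : (q1.concat h1.symm).IsPath := by
    rw [← SimpleGraph.Walk.isPath_reverse_iff, SimpleGraph.Walk.reverse_concat,
      SimpleGraph.Walk.cons_isPath_iff]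
    refine ⟨(SimpleGraph.Walk.isPath_reverse_iff q1).2 (q1.isPath_of_length_eq_dist hq1), ?_⟩
    rw [SimpleGraph.Walk.support_reverse, List.mem_reverse]
    exact hu1
  have hp2 : (q2.concat h2.symm).IsPath := by
    rw [← SimpleGraph.Walk.isPath_reverse_iff, SimpleGraph.Walk.reverse_concat,
      SimpleGraph.Walk.cons_isPath_iff]
    refine ⟨(SimpleGraph.Walk.isPath_reverse_iff q2).2 (q2.isPath_of_length_eq_dist hq2), ?_⟩
    rw [SimpleGraph.Walk.support_reverse, List.mem_reverse]
    exact hu2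
  have := hG.IsAcyclic.path_unique ⟨q1.concat h1.symm, hp1⟩ ⟨q2.concat h2.symm, hp2⟩
  have heq : q1.concat h1.symm = q2.concat h2.symm := congrArg Subtype.val this
  obtain ⟨hv, -⟩ := SimpleGraph.Walk.concat_inj heq
  exact hv

/-- In a connected graph, every vertex other than `r` has a neighbor one step closer to `r`. -/
lemma exists_parent (hc : G.Connected) {r u : V} (h : u ≠ r) :
    ∃ w, G.Adj u w ∧ G.dist r w + 1 = G.dist r u := by
  have hne : G.dist r u ≠ 0 :=
    SimpleGraph.dist_ne_zero_iff_ne_and_reachable.2 ⟨Ne.symm h, hc.preconnected r u⟩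
  obtain ⟨p, hp⟩ := (hc.preconnected r u).exists_walk_length_eq_dist
  obtain ⟨w, hadj, q, hq⟩ := SimpleGraph.Walk.exists_eq_cons_of_ne h p.reverse
  have hlen : q.length = G.dist r u - 1 := by
    have : p.reverse.length = G.dist r u := by rw [SimpleGraph.Walk.length_reverse, hp]
    rw [hq, SimpleGraph.Walk.length_cons] at this
    omega
  have h1 : G.dist r w ≤ G.dist r u - 1 := by
    have := SimpleGraph.dist_le q.reverse
    rw [SimpleGraph.Walk.length_reverse, hlen] at this
    exact this
  have h2 : G.dist r u ≤ G.dist r w + 1 := by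
    have ht := hc.dist_triangle (u := r) (v := w) (w := u)
    have : G.dist w u = 1 := SimpleGraph.dist_eq_one_iff_adj.2 hadj.symm
    omega
  exact ⟨w, hadj, by omega⟩

/-- A tree on at least two vertices has a pendant vertex. -/
lemma exists_pendant (hG : G.IsTree) (hcard : 2 ≤ Fintype.card V) :
    ∃ v, G.degree v = 1 := by
  by_contra hno
  push_neg at hno
  have hdeg : ∀ v, 2 ≤ G.degree v := by
    intro v
    have hpos : 0 < G.degree v := by
      rw [G.degree_pos_iff_exists_adj]
      obtain ⟨w, hw⟩ := Fintype.exists_ne_of_one_lt_card hcard v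
      obtain ⟨p⟩ := hG.isConnected.preconnected v w
      obtain ⟨x, hx, -, -⟩ := SimpleGraph.Walk.exists_eq_cons_of_ne (Ne.symm hw) p
      exact ⟨x, hx⟩
    have := hno v
    omega
  have hsum : ∑ v, G.degree v = 2 * G.edgeFinset.card :=
    G.sum_degrees_eq_twice_card_edges
  have hE : G.edgeFinset.card + 1 = Fintype.card V := hG.card_edgeFinset
  have hge : 2 * Fintype.card V ≤ ∑ v, G.degree v := by
    calc 2 * Fintype.card V = ∑ _v : V, 2 := by
          rw [Finset.sum_const, Finset.card_univ, smul_eq_mul, mul_comm]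
      _ ≤ ∑ v, G.degree v := Finset.sum_le_sum fun v _ => hdeg v
  omega

/-- If an eigenvector vanishes at `u` and at all neighbors of `u` other than `v`,
then it vanishes at `v` as well. -/
lemma zero_of_nbr {lam : ℝ} {y : V → ℝ} (heq : G.lapMatrix ℝ *ᵥ y = lam • y)
    {u v : V} (hadj : G.Adj u v) (hu : y u = 0)
    (hw : ∀ w, G.Adj u w → w ≠ v → y w = 0) : y v = 0 := by
  have h := congrFun heq u
  rw [SimpleGraph.lapMatrix_mulVec_apply, Pi.smul_apply, smul_eq_mul] at h
  have hsum : ∑ w ∈ G.neighborFinset u, y w = y v := by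
    refine Finset.sum_eq_single_of_mem v (by rw [SimpleGraph.mem_neighborFinset]; exact hadj) ?_
    intro w hw' hne
    exact hw w (by rwa [SimpleGraph.mem_neighborFinset] at hw') hne
  rw [hu, hsum] at h
  simpa using h.symm

theorem tree_controllable_aux
    {V : Type*} [Fintype V] [DecidableEq V]
    (G : SimpleGraph V) (hG : G.IsTree) (hcard : 2 ≤ Fintype.card V)
    (F : Set V) (hF : (F ∩ {v : V | G.degree v = 1}).ncard ≤ 1) :
    ∀ (lam : ℝ) (y : V → ℝ), y ≠ 0 → G.lapMatrix ℝ *ᵥ y = lam • y →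
      ∃ v ∉ F, y v ≠ 0 := by
  intro lam y hy heq
  by_contra hcon
  push_neg at hcon
  -- choose the root `r`: a pendant vertex, the one in `F` if there is one
  obtain ⟨r, hr_leaf, hrF⟩ : ∃ r, G.degree r = 1 ∧ ∀ v ∈ F, G.degree v = 1 → v = r := by
    by_cases h' : ∃ v ∈ F, G.degree v = 1
    · obtain ⟨r, hrFmem, hrl⟩ := h'
      refine ⟨r, hrl, fun v hvF hvl => ?_⟩
      by_contra hne
      have h2 : 1 < (F ∩ {v : V | G.degree v = 1}).ncard := by
        rw [Set.one_lt_ncard_iff (Set.toFinite _)]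
        exact ⟨v, r, ⟨hvF, hvl⟩, ⟨hrFmem, hrl⟩, hne⟩
      omega
    · push_neg at h'
      obtain ⟨r, hrl⟩ := exists_pendant hG hcard
      exact ⟨r, hrl, fun v hvF hvl => absurd hvl (h' v hvF)⟩
  -- every pendant vertex other than `r` has `y = 0`
  have hother : ∀ v, G.degree v = 1 → v ≠ r → y v = 0 := by
    intro v hv hvr
    by_cases hvF : v ∈ F
    · exact absurd (hrF v hvF hv) hvr
    · exact hcon v hvF
  -- downward induction on distance from the root
  have main : ∀ n : ℕ, ∀ v : V, Fintype.card V ≤ G.dist r v + n → y v = 0 := by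
    intro n
    induction n with
    | zero =>
      intro v hv
      exfalso
      obtain ⟨p, hp, hlen⟩ := hG.isConnected.exists_path_of_dist r v
      have := hp.length_lt
      omega
    | succ n ih =>
      intro v hv
      have IH : ∀ w, G.dist r v + 1 ≤ G.dist r w → y w = 0 := fun w hw => ih w (by omega)
      by_cases hvr : v = r
      · -- root case: use the eigen-equation at the unique neighbor of `r`
        have hd0 : G.dist r v = 0 := by rw [hvr]; exact SimpleGraph.dist_self
        have hdegv : G.degree v = 1 := by rw [hvr]; exact hr_leaf
        obtain ⟨c, hc⟩ := (G.degree_pos_iff_exists_adj v).1 (by omega)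
        have hdc : G.dist r c = 1 := SimpleGraph.dist_eq_one_iff_adj.2 (hvr ▸ hc)
        refine zero_of_nbr heq hc.symm (IH c (by omega)) ?_
        intro w hw hwv
        refine IH w ?_
        have hne : G.dist r w ≠ 0 := SimpleGraph.dist_ne_zero_iff_ne_and_reachable.2
          ⟨fun h => hwv (h.symm.trans hvr.symm), hG.isConnected.preconnected r w⟩
        omega
      · by_cases hdeg : G.degree v = 1
        · exact hother v hdeg hvr
        · -- find a child `u` of `v` (a neighbor at distance `dist r v + 1`)
          obtain ⟨p, hpadj, hpd⟩ := exists_parent hG.isConnected hvr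
          have hdeg2 : 2 ≤ G.degree v := by
            have : 0 < G.degree v := (G.degree_pos_iff_exists_adj v).2 ⟨p, hpadj⟩
            omega
          have h1lt : 1 < (G.neighborFinset v).card := by
            rwa [G.card_neighborFinset_eq_degree]
          obtain ⟨u, humem, hup⟩ := Finset.exists_mem_ne h1lt p
          have huadj : G.Adj v u := by rwa [SimpleGraph.mem_neighborFinset] at humem
          have hud : G.dist r v + 1 ≤ G.dist r u := by
            by_contra hle
            push_neg at hle
            exact hup (tree_parent_unique (r := r) hG huadj hpadj (by omega) (by omega))
          refine zero_of_nbr heq huadj.symm (IH u hud) ?_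
          intro w hw hwv
          refine IH w ?_
          have htri : G.dist r u ≤ G.dist r v + 1 := by
            have ht := hG.isConnected.dist_triangle (u := r) (v := v) (w := u)
            have : G.dist v u = 1 := SimpleGraph.dist_eq_one_iff_adj.2 huadj
            omega
          have : G.dist r u + 1 ≤ G.dist r w := by
            by_contra hle
            push_neg at hle
            exact hwv (tree_parent_unique (r := r) hG hw huadj.symm (by omega) (by omega))
          omega
  exact hy (funext fun v => main (Fintype.card V) v (by omega))

end Aux

/-- Theorem (leaders from leaves): if the follower set `F` contains at most one pendant vertex
of the tree `G`, then every eigenvector of the Laplacian is nonzero at some vertex outside `F`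
(so `G` is controllable under the leader set `V \ F`). -/
theorem tree_controllable_of_followers_contain_at_most_one_pendant
    {V : Type*} [Fintype V] [DecidableEq V]
    (G : SimpleGraph V) (hG : G.IsTree) (hcard : 2 ≤ Fintype.card V)
    (F : Set V) (hF : (F ∩ {v : V | G.degree v = 1}).ncard ≤ 1) :
    ∀ (lam : ℝ) (y : V → ℝ), y ≠ 0 → G.lapMatrix ℝ *ᵥ y = lam • y →
      ∃ v ∉ F, y v ≠ 0 :=
  tree_controllable_aux G hG hcard F hF
end

section
/- Let G be a tree with at least two vertices and let S be a perfect critical set of G with S ≠ V. Then the induced subgraph G[S] is disconnected. -/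
open Matrix
open scoped Classical

/-!
Since `S ≠ V` and the tree is connected, some edge `u w` leaves `S` with `u ∉ S`, `w ∈ S`.
If `G[S]` were connected, `w` would be the only neighbour of `u` in `S`: a second one `w'` could be
joined to `w` inside `S`, closing a cycle through `u`. The eigenvalue equation at `u`,
`deg u · y u - ∑_{x ~ u} y x = λ · y u`, then reads `-y w = 0`, although `y` is nonzero on `S`.
-/

namespace SimpleGraph

variable {V : Type*} {G : SimpleGraph V}

lemma IsAcyclic.eq_of_adj_of_preconnected_induce (hG : G.IsAcyclic) {S : Set V}
    (hS : (G.induce S).Preconnected) {u w w' : V} (hu : u ∉ S) (hw : w ∈ S) (hw' : w' ∈ S)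
    (huw : G.Adj u w) (huw' : G.Adj u w') : w = w' := by
  by_contra hne
  obtain ⟨q⟩ := hS ⟨w, hw⟩ ⟨w', hw'⟩
  have hq : s(u, w') ∉ (q.map (Embedding.induce S).toHom).edges := fun he => by
    have hu' := (q.map _).fst_mem_support_of_mem_edges he
    rw [Walk.support_map, List.mem_map] at hu'
    obtain ⟨x, -, rfl⟩ := hu'
    exact hu x.2
  have hmem := isBridge_iff_forall_walk_mem_edges.mp (isAcyclic_iff_forall_adj_isBridge.mp hG huw')
    (.cons huw (q.map (Embedding.induce S).toHom))
  change s(u, w') ∈ s(u, w) :: _ at hmem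
  rw [List.mem_cons, Sym2.congr_right] at hmem
  exact hmem.elim (fun h => hne h.symm) hq

variable [Fintype V] [DecidableEq V] [DecidableRel G.Adj]

lemma eq_zero_of_lapMatrix_mulVec_eq_smul_s7 {y : V → ℝ} {lam : ℝ}
    (hy : G.lapMatrix ℝ *ᵥ y = lam • y) {u w : V} (hu : y u = 0) (huw : G.Adj u w)
    (hzero : ∀ x, G.Adj u x → x ≠ w → y x = 0) : y w = 0 := by
  have hsum : ∑ x ∈ G.neighborFinset u, y x = y w :=
    Finset.sum_eq_single_of_mem w ((G.mem_neighborFinset u w).mpr huw)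
      fun x hx => hzero x ((G.mem_neighborFinset u x).mp hx)
  have hu_eq := congrFun hy u
  rw [lapMatrix_mulVec_apply, hsum] at hu_eq
  simpa [hu] using hu_eq

end SimpleGraph

theorem pcs_of_tree_induces_disconnected_general {V : Type*} [Fintype V] [DecidableEq V]
    (G : SimpleGraph V) (hG : G.IsTree)
    (S : Set V) (hS : IsPerfectCriticalSet G S) (hSV : S ≠ Set.univ) :
    ¬ (G.induce S).Connected := by
  intro hconn
  obtain ⟨⟨s, hs⟩, lam, y, -, hy, hy_out, hy_in⟩ := hS
  obtain ⟨v, hv⟩ := (Set.ne_univ_iff_exists_notMem S).mp hSV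
  obtain ⟨d, -, hw, hu⟩ := (hG.connected.preconnected s v).some.exists_boundary_dart S hs hv
  refine hy_in _ hw <| G.eq_zero_of_lapMatrix_mulVec_eq_smul_s7 hy (hy_out _ hu) d.adj.symm
    fun x hux hxw => ?_
  by_cases hx : x ∈ S
  · exact absurd (hG.isAcyclic.eq_of_adj_of_preconnected_induce hconn.preconnected hu hx hw
      hux d.adj.symm) hxw
  · exact hy_out x hx

/-- Proposition: a nontrivial perfect critical set of a tree induces a disconnected subgraph. -/
theorem pcs_of_tree_induces_disconnected {V : Type*} [Fintype V] [DecidableEq V]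
    (G : SimpleGraph V) (hG : G.IsTree) (hcard : 2 ≤ Fintype.card V)
    (S : Set V) (hS : IsPerfectCriticalSet G S) (hSV : S ≠ Set.univ) :
    ¬ (G.induce S).Connected :=
  pcs_of_tree_induces_disconnected_general G hG S hS hSV
end

section
/- Let G be a tree and let S be a minimal perfect critical set of G with S ≠ V. Let B = {u ∈ V∖S : N_S(u) ≠ ∅ and N_S(u) ≠ S}. Then no two vertices of B are adjacent in G; that is, in the simplified graph G̃ = G[S ∪ B], the set B is a set of pairwise non-adjacent (isolated in G̃[B]) vertices. -/
open Matrix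
open scoped Classical

/-!
Since `G` is a tree, an edge `uw` between two vertices of `B` is a bridge. Both ends lie outside
`S`, so an inducing eigenvector of `S` vanishes at them, and its restriction to the side of `u` is
again an eigenvector: the Laplacian only couples the two sides through `u` and `w`. That
restriction makes `S ∩ (side of u)` a perfect critical set. It contains the `S`-neighbour of `u`
but misses the `S`-neighbour of `w`, contradicting the minimality of `S`.
-/

namespace SimpleGraph

variable {V : Type*} {G : SimpleGraph V}

theorem lapMatrix_mulVec_indicator [Fintype V] [DecidableEq V] {R : Type*} [NonAssocRing R]
    {y : V → R} {lam : R} (hy : G.lapMatrix R *ᵥ y = lam • y) {C : Set V}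
    (hC : ∀ v x, G.Adj v x → v ∈ C → x ∉ C → y v = 0 ∧ y x = 0) :
    G.lapMatrix R *ᵥ C.indicator y = lam • C.indicator y := by
  funext v
  have hyv := congrFun hy v
  rw [lapMatrix_mulVec_apply] at hyv ⊢
  by_cases hv : v ∈ C
  · have hsum :
        ∑ x ∈ G.neighborFinset v, C.indicator y x = ∑ x ∈ G.neighborFinset v, y x := by
      refine Finset.sum_congr rfl fun x hx => ?_
      by_cases hxC : x ∈ C
      · exact Set.indicator_of_mem hxC y
      · rw [Set.indicator_of_notMem hxC, ((hC v x ((mem_neighborFinset G v x).mp hx)) hv hxC).2]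
    rw [hsum, Set.indicator_of_mem hv, hyv, Pi.smul_apply, Pi.smul_apply, Set.indicator_of_mem hv]
  · have hsum : ∑ x ∈ G.neighborFinset v, C.indicator y x = 0 := by
      refine Finset.sum_eq_zero fun x hx => ?_
      by_cases hxC : x ∈ C
      · rw [Set.indicator_of_mem hxC, (hC x v ((mem_neighborFinset G v x).mp hx).symm hxC hv).1]
      · exact Set.indicator_of_notMem hxC y
    simp [hsum, Set.indicator_of_notMem hv]

theorem IsBridge.eq_of_adj_of_reachable_of_not_reachable {u w v x : V} (huw : G.IsBridge s(u, w))
    (hv : (G.deleteEdges {s(u, w)}).Reachable u v)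
    (hx : ¬ (G.deleteEdges {s(u, w)}).Reachable u x) (hvx : G.Adj v x) : v = u ∧ x = w := by
  by_cases he : s(v, x) = s(u, w)
  · rcases Sym2.eq_iff.mp he with ⟨rfl, rfl⟩ | ⟨rfl, rfl⟩
    · exact ⟨rfl, rfl⟩
    · exact absurd hv huw
  · exact absurd (hv.trans (deleteEdges_adj.mpr ⟨hvx, he⟩).reachable) hx

end SimpleGraph

open SimpleGraph

theorem IsPerfectCriticalSet.inter_of_boundary_outside {V : Type*} [Fintype V] [DecidableEq V]
    {G : SimpleGraph V} {S C : Set V} (hS : IsPerfectCriticalSet G S)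
    (hC : ∀ v x, G.Adj v x → v ∈ C → x ∉ C → v ∉ S ∧ x ∉ S)
    (hne : (S ∩ C).Nonempty) :
    IsPerfectCriticalSet G (S ∩ C) := by
  obtain ⟨-, lam, y, -, hy, hout, hin⟩ := hS
  obtain ⟨s, hs, hsC⟩ := hne
  have heig : G.lapMatrix ℝ *ᵥ C.indicator y = lam • C.indicator y :=
    lapMatrix_mulVec_indicator hy fun v x hvx hv hx =>
      ⟨hout v (hC v x hvx hv hx).1, hout x (hC v x hvx hv hx).2⟩
  refine ⟨⟨s, hs, hsC⟩, lam, C.indicator y, fun h => hin s hs ?_, heig, fun v hv => ?_,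
    fun v hv => ?_⟩
  · simpa [Set.indicator_of_mem hsC] using congrFun h s
  · by_cases hvC : v ∈ C
    · rw [Set.indicator_of_mem hvC]
      exact hout v fun hvS => hv ⟨hvS, hvC⟩
    · exact Set.indicator_of_notMem hvC y
  · rw [Set.indicator_of_mem hv.2]
    exact hin v hv.1

theorem mpcs_of_tree_outside_vertices_pairwise_nonadjacent_general
    {V : Type*} [Fintype V] [DecidableEq V]
    (G : SimpleGraph V) (hG : G.IsTree)
    (S : Set V) (hS : IsMinimalPerfectCriticalSet G S)
    (B : Set V)
    (hB : B = {u : V | u ∉ S ∧ (∃ w ∈ S, G.Adj u w) ∧ ¬ (∀ w ∈ S, G.Adj u w)}) :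
    ∀ u ∈ B, ∀ w ∈ B, ¬ G.Adj u w := by
  subst hB
  rintro u ⟨huS, ⟨s, hs, hus⟩, -⟩ w ⟨hwS, ⟨t, ht, hwt⟩, -⟩ huw
  have hbridge : G.IsBridge s(u, w) := isAcyclic_iff_forall_adj_isBridge.mp hG.isAcyclic huw
  set C : Set V := {v | (G.deleteEdges {s(u, w)}).Reachable u v}
  have hsC : s ∈ C := (deleteEdges_adj.mpr ⟨hus, by grind⟩).reachable
  have htC : t ∉ C := fun hut =>
    hbridge (hut.trans (deleteEdges_adj.mpr ⟨hwt, by grind⟩).reachable.symm)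
  refine hS.2 (S ∩ C) ⟨Set.inter_subset_left, fun h => htC (h ht).2⟩
    (hS.1.inter_of_boundary_outside (fun v x hvx hv hx => ?_) ⟨s, hs, hsC⟩)
  obtain ⟨rfl, rfl⟩ := hbridge.eq_of_adj_of_reachable_of_not_reachable hv hx hvx
  exact ⟨huS, hwS⟩

/-- Proposition: if `S` is a nontrivial minimal perfect critical set of a tree `G` and `B` is
the set of vertices outside `S` whose neighborhood in `S` is neither empty nor all of `S`
(the vertices of the simplified graph outside `S`), then no two vertices of `B` are adjacent. -/
theorem mpcs_of_tree_outside_vertices_pairwise_nonadjacent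
    {V : Type*} [Fintype V] [DecidableEq V]
    (G : SimpleGraph V) (hG : G.IsTree)
    (S : Set V) (hS : IsMinimalPerfectCriticalSet G S) (hSV : S ≠ Set.univ)
    (B : Set V)
    (hB : B = {u : V | u ∉ S ∧ (∃ w ∈ S, G.Adj u w) ∧ ¬ (∀ w ∈ S, G.Adj u w)}) :
    ∀ u ∈ B, ∀ w ∈ B, ¬ G.Adj u w :=
  mpcs_of_tree_outside_vertices_pairwise_nonadjacent_general G hG S hS B hB
end

section
/- Let G be a tree with at least two vertices and let S ⊆ V be an independent set (no two vertices of S are adjacent in G) with |S| ≥ 3. Then S is not a minimal perfect critical set of G. -/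
open Matrix
open scoped Classical

private lemma tree_edge_bound {V : Type*} [Fintype V] [DecidableEq V] {G : SimpleGraph V}
    (hG : G.IsTree) (A : Finset (Sym2 V)) (hA : A ⊆ G.edgeFinset)
    (K : Finset V) (hK : ∀ e ∈ A, ∀ v, v ∈ e → v ∈ K) (u0 : V) (hu0 : u0 ∈ K) :
    A.card + 1 ≤ K.card := by
  classical
  choose p hp hup using hG.existsUnique_path
  set nxt : V → V := fun r => (p r u0).getVert 1 with hnxt
  have key : ∀ r, r ≠ u0 → G.Adj r (nxt r) ∧ (p r u0).length = (p (nxt r) u0).length + 1 := by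
    intro r hr
    have hnil : ¬ (p r u0).Nil := SimpleGraph.Walk.not_nil_of_ne hr
    obtain ⟨v, h, q, hq⟩ := SimpleGraph.Walk.not_nil_iff.mp hnil
    have hv : nxt r = v := by
      rw [hnxt]; simp only [hq, SimpleGraph.Walk.getVert_cons_succ, SimpleGraph.Walk.getVert_zero]
    have hqpath : q.IsPath := by
      have := hp r u0; rw [hq] at this; exact this.of_cons
    have hq' : q = p v u0 := hup v u0 q hqpath
    subst hv
    refine ⟨h, ?_⟩
    rw [hq, hq', SimpleGraph.Walk.length_cons]
  set f : V → Sym2 V := fun r => s(r, nxt r) with hf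
  set R : Finset V := Kᶜ with hR
  have hne : ∀ r ∈ R, r ≠ u0 := by
    intro r hr h; rw [hR, Finset.mem_compl] at hr; exact hr (h ▸ hu0)
  have hinj : Set.InjOn f R := by
    intro r1 h1 r2 h2 heq
    by_contra hne12
    rw [hf] at heq
    simp only [Sym2.eq_iff] at heq
    rcases heq with ⟨h, h'⟩ | ⟨h, h'⟩
    · exact hne12 h
    · have k1 := (key r1 (hne r1 h1)).2
      have k2 := (key r2 (hne r2 h2)).2
      rw [h'] at k1
      rw [← h] at k2
      omega
  have himg : R.image f ⊆ G.edgeFinset \ A := by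
    intro e he
    rw [Finset.mem_image] at he
    obtain ⟨r, hr, rfl⟩ := he
    rw [Finset.mem_sdiff]
    constructor
    · rw [SimpleGraph.mem_edgeFinset, SimpleGraph.mem_edgeSet]
      exact (key r (hne r hr)).1
    · intro hmem
      have := hK _ hmem r (by simp [hf])
      rw [hR, Finset.mem_compl] at hr
      exact hr this
  have hcard1 : R.card ≤ G.edgeFinset.card - A.card := by
    have := Finset.card_le_card himg
    rw [Finset.card_image_of_injOn hinj] at this
    rwa [Finset.card_sdiff_of_subset hA] at this
  have hcard2 : G.edgeFinset.card + 1 = Fintype.card V := hG.card_edgeFinset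
  have h
 := Finset.card_le_card hA
  have hRcard : R.card = Fintype.card V - K.card := by
    rw [hR, Finset.card_compl]
  have hKle : K.card ≤ Fintype.card V := Finset.card_le_univ K
  omega

/-- Theorem: an independent set with at least three vertices is never a minimal perfect
critical set of a tree. -/
theorem no_independent_mpcs_of_card_ge_three {V : Type*} [Fintype V] [DecidableEq V]
    (G : SimpleGraph V) (hG : G.IsTree) (hcard : 2 ≤ Fintype.card V)
    (S : Set V) (hind : ∀ u ∈ S, ∀ w ∈ S, ¬ G.Adj u w) (hS : 3 ≤ S.ncard) :
    ¬ IsMinimalPerfectCriticalSet G S := by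
  rintro ⟨⟨hSne, lam, y, hy0, heig, hout, hin⟩, hmin⟩
  have heigv : ∀ v, (G.degree v : ℝ) * y v - ∑ u ∈ G.neighborFinset v, y u = lam * y v := by
    intro v
    have h1 := congrFun heig v
    rwa [SimpleGraph.lapMatrix_mulVec_apply, Pi.smul_apply, smul_eq_mul] at h1
  -- all vertices of S have degree lam
  have hdeg : ∀ u ∈ S, (G.degree u : ℝ) = lam := by
    intro u hu
    have hsum : ∑ w ∈ G.neighborFinset u, y w = 0 := by
      apply Finset.sum_eq_zero
      intro w hw
      rw [SimpleGraph.mem_neighborFinset] at hw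
      exact hout w fun hwS => hind u hu w hwS hw
    have h1 := heigv u
    rw [hsum, sub_zero] at h1
    exact mul_right_cancel₀ (hin u hu) h1
  -- neighbor sums vanish outside S
  have hnsum : ∀ v ∉ S, ∑ u ∈ G.neighborFinset v, y u = 0 := by
    intro v hv
    have h1 := heigv v
    rw [hout v hv, mul_zero, mul_zero, zero_sub, neg_eq_zero] at h1
    exact h1
  set C : Set V := {v | v ∉ S ∧ ∃ u ∈ S, G.Adj v u} with hC
  -- key sum identity
  have key : ∀ (g : V → ℝ), (∀ w ∉ S, g w = 0) → ∀ v : V,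
      (∑ u : S, if G.Adj v (u : V) then g u else 0) = ∑ w ∈ G.neighborFinset v, g w := by
    intro g hg v
    have h1 : ∑ w ∈ G.neighborFinset v, g w = ∑ w : V, if G.Adj v w then g w else 0 := by
      rw [← Finset.sum_filter]
      congr 1
      ext w
      simp [SimpleGraph.mem_neighborFinset]
    have h2 : (∑ w : V, if G.Adj v w then g w else 0)
        = ∑ w ∈ S.toFinset, if G.Adj v w then g w else 0 := by
      symm
      apply Finset.sum_subset (Finset.subset_univ _)
      intro w _ hw
      rw [Set.mem_toFinset] at hw
      simp [hg w hw]
    have h3 : (∑ w ∈ S.toFinset, if G.Adj v w then g w else 0)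
        = ∑ u : S, if G.Adj v (u : V) then g u else 0 :=
      Finset.sum_subtype S.toFinset (fun x => Set.mem_toFinset) _
    rw [h1, h2, h3]
  by_cases hcase : C.toFinset.card + 2 ≤ S.toFinset.card
  · -- linear algebra case
    set M : Matrix C S ℝ := fun v u => if G.Adj (v : V) (u : V) then 1 else 0 with hM
    set φ := M.mulVecLin with hφ
    have hφ_apply : ∀ (x : S → ℝ) (v : C),
        φ x v = ∑ u : S, if G.Adj (v : V) (u : V) then x u else 0 := by
      intro x v
      rw [hφ, Matrix.mulVecLin_apply, Matrix.mulVec, dotProduct]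
      apply Finset.sum_congr rfl
      intro u _
      rw [hM]
      simp [ite_mul]
    set x0 : S → ℝ := fun u => y u with hx0
    have hx0ker : x0 ∈ LinearMap.ker φ := by
      rw [LinearMap.mem_ker]
      funext v
      rw [hφ_apply, Pi.zero_apply]
      have := key y hout v
      rw [this]
      exact hnsum v v.2.1
    have hx0ne : x0 ≠ 0 := by
      obtain ⟨u, hu⟩ := hSne
      intro h
      exact hin u hu (by have := congrFun h ⟨u, hu⟩; simpa using this)
    -- dimension count
    have hrank : 2 ≤ Module.finrank ℝ (LinearMap.ker φ) := by
      have h1 := LinearMap.finrank_range_add_finrank_ker φ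
      have h2 : Module.finrank ℝ (LinearMap.range φ) ≤ Module.finrank ℝ (C → ℝ) :=
        Submodule.finrank_le _
      rw [Module.finrank_fintype_fun_eq_card] at h1 h2
      rw [← Set.toFinset_card] at h1 h2
      omega
    have hnotle : ¬ (LinearMap.ker φ ≤ Submodule.span ℝ {x0}) := by
      intro hle
      have h1 := Submodule.finrank_mono hle
      rw [finrank_span_singleton hx0ne] at h1
      omega
    obtain ⟨z, hzker, hzspan⟩ := SetLike.not_le_iff_exists.mp hnotle
    obtain ⟨u0, hu0⟩ := hSne
    set c : ℝ := z ⟨u0, hu0⟩ / x0 ⟨u0, hu0⟩ with hc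
    set z' : S → ℝ := z - c • x0 with hz'
    have hz'ker : z' ∈ LinearMap.ker φ :=
      Submodule.sub_mem _ hzker (Submodule.smul_mem _ _ hx0ker)
    have hz'ne : z' ≠ 0 := by
      intro h
      apply hzspan
      rw [Submodule.mem_span_singleton]
      exact ⟨c, by rw [hz'] at h; exact (sub_eq_zero.mp h).symm⟩
    have hz'u0 : z' ⟨u0, hu0⟩ = 0 := by
      rw [hz']
      simp only [Pi.sub_apply, Pi.smul_apply, smul_eq_mul, hc]
      rw [div_mul_cancel₀]
      · ring
      · exact hin u0 hu0
    set y' : V → ℝ := fun v => if h : v ∈ S then z' ⟨v, h⟩ else 0 with hy'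
    have hy'out : ∀ w ∉ S, y' w = 0 := by
      intro w hw; rw [hy']; simp [hw]
    have hy'S : ∀ (u : V) (hu : u ∈ S), y' u = z' ⟨u, hu⟩ := by
      intro u hu; rw [hy']; simp [hu]
    have hφz' : ∀ v : C, (∑ u : S, if G.Adj (v : V) (u : V) then z' u else 0) = 0 := by
      intro v
      have := hz'ker
      rw [LinearMap.mem_ker] at this
      have h2 := congrFun this v
      rw [hφ_apply] at h2
      exact h2
    have hsum_y' : ∀ v : V, (∑ u : S, if G.Adj v (u : V) then z' u else 0)
        = ∑ w ∈ G.neighborFinset v, y' w := by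
      intro v
      rw [← key y' hy'out v]
      apply Finset.sum_congr rfl
      intro u _
      rw [hy'S u u.2]
    have heig' : G.lapMatrix ℝ *ᵥ y' = lam • y' := by
      funext v
      rw [SimpleGraph.lapMatrix_mulVec_apply, Pi.smul_apply, smul_eq_mul, ← hsum_y' v]
      by_cases hv : v ∈ S
      · have hz : (∑ u : S, if G.Adj v (u : V) then z' u else 0) = 0 := by
          apply Finset.sum_eq_zero
          intro u _
          rw [if_neg (hind v hv u u.2)]
        rw [hz, sub_zero, hdeg v hv]
      · by_cases hvC : v ∈ C
        · rw [hφz' ⟨v, hvC⟩, hy'out v hv, sub_zero, mul_zero, mul_zero]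
        · have hz : (∑ u : S, if G.Adj v (u : V) then z' u else 0) = 0 := by
            apply Finset.sum_eq_zero
            intro u _
            rw [if_neg]
            intro hadj
            exact hvC ⟨hv, u, u.2, hadj⟩
          rw [hz, hy'out v hv, sub_zero, mul_zero, mul_zero]
    set T : Set V := {v | y' v ≠ 0} with hT
    have hTS : T ⊆ S := by
      intro v hv
      by_contra hvS
      exact hv (hy'out v hvS)
    have hU0 : u0 ∉ T := by
      rw [hT]
      simp only [Set.mem_setOf_eq, not_not]
      rw [hy'S u0 hu0, hz'u0]
    have hTss : T ⊂ S := ⟨hTS, fun hsub => hU0 (hsub hu0)⟩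
    have hy'ne : y' ≠ 0 := by
      intro h
      apply hz'ne
      funext u
      have := congrFun h u
      rw [hy'S u u.2] at this
      simpa using this
    obtain ⟨v0, hv0⟩ : ∃ v, y' v ≠ 0 := by
      by_contra h
      push_neg at h
      exact hy'ne (funext h)
    exact hmin T hTss ⟨⟨v0, hv0⟩, lam, y', hy'ne, heig', fun v hv => not_not.mp fun h => hv h,
      fun v hv => hv⟩
  · -- counting case
    push_neg at hcase
    obtain ⟨u0, hu0⟩ := hSne
    set d : ℕ := G.degree u0 with hd
    have hdS : ∀ u ∈ S, G.degree u = d := by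
      intro u hu
      have h1 : ((G.degree u : ℝ)) = (d : ℝ) := by rw [hdeg u hu, hd, hdeg u0 hu0]
      exact_mod_cast h1
    set P : Finset (V × V) := Finset.univ.filter (fun p => p.1 ∈ S ∧ G.Adj p.1 p.2) with hP
    have hP1 : P.card = d * S.toFinset.card := by
      rw [hP, Finset.card_filter, Fintype.sum_prod_type]
      have h1 : ∀ u : V, (∑ v : V, if u ∈ S ∧ G.Adj u v then 1 else 0)
          = if u ∈ S then G.degree u else 0 := by
        intro u
        by_cases hu : u ∈ S
        · rw [if_pos hu]
          simp only [hu, true_and]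
          have hh := G.degree_eq_sum_if_adj (R := ℕ) u
          simpa using hh.symm
        · simp [hu]
      rw [Finset.sum_congr rfl fun u _ => h1 u]
      rw [← Finset.sum_filter]
      have h2 : Finset.univ.filter (· ∈ S) = S.toFinset := by
        ext u; simp
      rw [h2]
      rw [Finset.sum_congr rfl fun u hu => hdS u (Set.mem_toFinset.mp hu)]
      rw [Finset.sum_const, smul_eq_mul, mul_comm]
    set Q : V → Finset V := fun v => Finset.univ.filter (fun u => u ∈ S ∧ G.Adj u v) with hQ
    have hP2 : P.card = ∑ v ∈ C.toFinset, (Q v).card := by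
      rw [hP, Finset.card_filter, Fintype.sum_prod_type_right]
      have h1 : ∀ v : V, (∑ u : V, if u ∈ S ∧ G.Adj u v then 1 else 0) = (Q v).card := by
        intro v
        rw [hQ, Finset.card_filter]
      rw [Finset.sum_congr rfl fun v _ => h1 v]
      symm
      apply Finset.sum_subset (Finset.subset_univ _)
      intro v _ hv
      rw [Set.mem_toFinset] at hv
      rw [Finset.card_eq_zero]
      rw [Finset.filter_eq_empty_iff]
      rintro u _ ⟨huS, hadj⟩
      by_cases hvS : v ∈ S
      · exact hind u huS v hvS hadj
      · exact hv ⟨hvS, u, huS, hadj.symm⟩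
    have hQ2 : ∀ v ∈ C, 2 ≤ (Q v).card := by
      rintro v ⟨hvS, u1, hu1, hadj⟩
      have hu1Q : u1 ∈ Q v := by
        rw [hQ]; simp [hu1, hadj.symm]
      by_contra hlt
      push_neg at hlt
      have hcard1 : (Q v).card = 1 := by
        have : 0 < (Q v).card := Finset.card_pos.mpr ⟨u1, hu1Q⟩
        omega
      obtain ⟨a, ha⟩ := Finset.card_eq_one.mp hcard1
      have hau1 : a = u1 := by
        have := hu1Q; rw [ha, Finset.mem_singleton] at this; exact this.symm
      have hsum := hnsum v hvS
      have hsplit : ∑ w ∈ G.neighborFinset v, y w = ∑ w ∈ Q v, y w := by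
        symm
        apply Finset.sum_subset
        · intro w hw
          rw [hQ, Finset.mem_filter] at hw
          rw [SimpleGraph.mem_neighborFinset]
          exact hw.2.2.symm
        · intro w hw hwQ
          apply hout
          intro hwS
          apply hwQ
          rw [hQ, Finset.mem_filter]
          rw [SimpleGraph.mem_neighborFinset] at hw
          exact ⟨Finset.mem_univ w, hwS, hw.symm⟩
      rw [hsplit, ha, Finset.sum_singleton, hau1] at hsum
      exact hin u1 hu1 hsum
    have hP2' : 2 * C.toFinset.card ≤ P.card := by
      rw [hP2]
      calc 2 * C.toFinset.card = ∑ _v ∈ C.toFinset, 2 := by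
            rw [Finset.sum_const, smul_eq_mul, mul_comm]
        _ ≤ ∑ v ∈ C.toFinset, (Q v).card :=
            Finset.sum_le_sum fun v hv => hQ2 v (Set.mem_toFinset.mp hv)
    -- edge bound
    set A : Finset (Sym2 V) := P.image (fun p => s(p.1, p.2)) with hA
    have hmemP : ∀ p ∈ P, p.1 ∈ S ∧ p.2 ∉ S ∧ G.Adj p.1 p.2 := by
      intro p hp
      rw [hP, Finset.mem_filter] at hp
      exact ⟨hp.2.1, fun h2 => hind p.1 hp.2.1 p.2 h2 hp.2.2, hp.2.2⟩
    have hAcard : A.card = P.card := by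
      rw [hA]
      apply Finset.card_image_of_injOn
      intro p hp q hq heq
      obtain ⟨hp1, hp2, hpadj⟩ := hmemP p hp
      obtain ⟨hq1, hq2, hqadj⟩ := hmemP q hq
      rw [Sym2.eq_iff] at heq
      rcases heq with ⟨h1, h2⟩ | ⟨h1, h2⟩
      · exact Prod.ext h1 h2
      · exact absurd (h1 ▸ hp1) hq2
    have hAsub : A ⊆ G.edgeFinset := by
      intro e he
      rw [hA, Finset.mem_image] at he
      obtain ⟨p, hp, rfl⟩ := he
      rw [SimpleGraph.mem_edgeFinset, SimpleGraph.mem_edgeSet]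
      exact (hmemP p hp).2.2
    set K : Finset V := S.toFinset ∪ C.toFinset with hK
    have hKmem : ∀ e ∈ A, ∀ v, v ∈ e → v ∈ K := by
      intro e he v hv
      rw [hA, Finset.mem_image] at he
      obtain ⟨p, hp, rfl⟩ := he
      obtain ⟨hp1, hp2, hpadj⟩ := hmemP p hp
      rw [Sym2.mem_iff] at hv
      rw [hK, Finset.mem_union, Set.mem_toFinset, Set.mem_toFinset]
      rcases hv with rfl | rfl
      · exact Or.inl hp1
      · exact Or.inr ⟨hp2, p.1, hp1, hpadj.symm⟩
    have hbound := tree_edge_bound hG A hAsub K hKmem u0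
      (by rw [hK, Finset.mem_union, Set.mem_toFinset]; exact Or.inl hu0)
    have hKcard : K.card = S.toFinset.card + C.toFinset.card := by
      rw [hK]
      rw [Finset.card_union_of_disjoint]
      rw [Finset.disjoint_left]
      intro a ha haC
      rw [Set.mem_toFinset] at ha haC
      exact haC.1 ha
    have hs3 : 3 ≤ S.toFinset.card := by
      rwa [Set.ncard_eq_toFinset_card'] at hS
    rw [hKcard, hAcard, hP1] at hbound
    set s := S.toFinset.card
    set cc := C.toFinset.card
    rw [hP1] at hP2'
    -- hbound : d * s + 1 ≤ s + cc, hP2' : 2 * cc ≤ d * s, hcase : s < cc + 2, hs3 : 3 ≤ s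
    rcases Nat.lt_or_ge d 2 with hd2 | hd2
    · interval_cases d <;> omega
    · have : 2 * s ≤ d * s := Nat.mul_le_mul_right s hd2
      omega
end

section
/- Let G be a tree with at least two vertices and let S ⊆ V be an independent set (no two vertices of S are adjacent in G). Then S is a minimal perfect critical set of G if and only if |S| = 2 and every vertex v ∉ S satisfies N_S(v) = ∅ or N_S(v) = S (i.e., the two vertices of S are twins). -/
open Matrix
open scoped Classical

/-!
Let `y` be an eigenvector, for the eigenvalue `μ`, whose support is exactly the independent set
`S`. The row of `L y = μ y` at a vertex of `S` reads `deg v * y v = μ * y v`, so all vertices of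
`S` have the same degree `d`; the row at a vertex `c ∉ S` says that the values of `y` on `N_S(c)`
sum to zero, so `|N_S(c)| ≥ 2` whenever `c` lies in the outer boundary `C` of `S`. Minimality
gives `|S| ≤ |C| + 1`: otherwise the `|C| + 1` linear conditions "`L z` vanishes on `C`" and
"`z` vanishes at a chosen vertex of `S`" leave a nonzero `z` supported in `S`, which is again an
eigenvector (for `d`) but has a strictly smaller support. The edges between `S` and `C` form a
forest on `S ∪ C`, so counting them from both sides gives `2|C| ≤ d|S| < |S| + |C|`, and these
inequalities force `d = 1`, `|C| = 1` and `|S| = 2`.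

Conversely, for twins `a`, `b` the vector `e_a - e_b` is an eigenvector for `deg a`, while a
singleton `{a}` is not a perfect critical set once `a` has a neighbour `u`: the row at `u` reads
`-y a = 0`.
-/

open Finset

namespace SimpleGraph

variable {V : Type*} [Fintype V] {G : SimpleGraph V}

lemma IsAcyclic.card_edgeFinset_lt_card [Nonempty V] [Fintype G.edgeSet] (hG : G.IsAcyclic) :
    #G.edgeFinset < Fintype.card V := by
  obtain ⟨T, hGT, hT⟩ := exists_maximal_isAcyclic_of_le_isAcyclic (le_top : G ≤ ⊤) hG
  have hTree : T.IsTree := maximal_isAcyclic_iff_isTree.mp (by simpa using hT)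
  rw [← hTree.card_edgeFinset]
  exact Nat.lt_succ_of_le (card_le_card (edgeFinset_mono hGT))

lemma IsAcyclic.card_edgeFinset_lt_of_support_subset [DecidableRel G.Adj] (hG : G.IsAcyclic)
    {s : Finset V} (hs : s.Nonempty) (h : G.support ⊆ s) : #G.edgeFinset < #s := by
  have : Nonempty (s : Set V) := hs.to_subtype
  rw [← card_edgeFinset_induce_of_support_subset h]
  convert (hG.induce (s : Set V)).card_edgeFinset_lt_card
  rw [← Set.toFinset_card, Finset.toFinset_coe]

variable [DecidableEq V]

noncomputable def outerBoundary (G : SimpleGraph V) (s : Finset V) : Finset V :=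
  {v | v ∉ s ∧ ∃ u ∈ s, G.Adj v u}

variable {s : Finset V}

lemma mem_outerBoundary {v : V} : v ∈ G.outerBoundary s ↔ v ∉ s ∧ ∃ u ∈ s, G.Adj v u := by
  simp [outerBoundary]

lemma isBipartiteWith_between_outerBoundary :
    (G.between s (G.outerBoundary s)).IsBipartiteWith s (G.outerBoundary s) :=
  between_isBipartiteWith <| Finset.disjoint_coe.2 <|
    Finset.disjoint_right.2 fun _ hv => (mem_outerBoundary.1 hv).1

lemma IsIndepSet.degree_between_outerBoundary_of_mem (hs : G.IsIndepSet s) {v : V} (hv : v ∈ s) :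
    (G.between s (G.outerBoundary s)).degree v = G.degree v := by
  rw [← card_neighborFinset_eq_degree, ← card_neighborFinset_eq_degree]
  congr 1
  ext u
  simp only [mem_neighborFinset, between_adj, mem_coe, mem_outerBoundary]
  refine ⟨And.left, fun h => ⟨h, Or.inl ⟨hv, fun hu => hs hv hu h.ne h, v, hv, h.symm⟩⟩⟩

lemma degree_between_outerBoundary_of_mem_outerBoundary {c : V} (hc : c ∈ G.outerBoundary s) :
    (G.between s (G.outerBoundary s)).degree c = #(G.neighborFinset c ∩ s) := by
  rw [← card_neighborFinset_eq_degree]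
  congr 1
  ext u
  have hcs := (mem_outerBoundary.1 hc).1
  simp only [mem_neighborFinset, between_adj, mem_coe, mem_inter]
  exact ⟨fun ⟨h, h'⟩ => ⟨h, h'.elim (fun h' => absurd h'.1 hcs) And.right⟩,
    fun ⟨h, hu⟩ => ⟨h, Or.inr ⟨hc, hu⟩⟩⟩

lemma IsIndepSet.sum_degree_eq_sum_card_neighborFinset_inter (hs : G.IsIndepSet s) :
    ∑ v ∈ s, G.degree v = ∑ c ∈ G.outerBoundary s, #(G.neighborFinset c ∩ s) := by
  calc ∑ v ∈ s, G.degree v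
      = ∑ v ∈ s, (G.between s (G.outerBoundary s)).degree v :=
        (sum_congr rfl fun v hv => hs.degree_between_outerBoundary_of_mem hv).symm
    _ = ∑ c ∈ G.outerBoundary s, (G.between s (G.outerBoundary s)).degree c :=
        isBipartiteWith_sum_degrees_eq isBipartiteWith_between_outerBoundary
    _ = ∑ c ∈ G.outerBoundary s, #(G.neighborFinset c ∩ s) :=
        sum_congr rfl fun c hc => degree_between_outerBoundary_of_mem_outerBoundary hc

lemma IsIndepSet.sum_degree_lt_card_add_card_outerBoundary (hG : G.IsAcyclic)
    (hs : G.IsIndepSet s) (hne : s.Nonempty) :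
    ∑ v ∈ s, G.degree v < #s + #(G.outerBoundary s) := by
  have hB := isBipartiteWith_between_outerBoundary (G := G) (s := s)
  rw [← sum_congr rfl fun v hv => hs.degree_between_outerBoundary_of_mem hv,
    isBipartiteWith_sum_degrees_eq_card_edges hB,
    ← card_union_of_disjoint (disjoint_coe.1 hB.disjoint)]
  refine (hG.anti between_le).card_edgeFinset_lt_of_support_subset (hne.mono subset_union_left) ?_
  simpa using isBipartiteWith_support_subset hB

variable {z : V → ℝ} {v : V}

lemma lapMatrix_mulVec_apply_of_isIndepSet (hs : G.IsIndepSet s) (hz : ∀ v ∉ s, z v = 0)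
    (hv : v ∈ s) : (G.lapMatrix ℝ *ᵥ z) v = G.degree v * z v := by
  rw [lapMatrix_mulVec_apply, sum_eq_zero fun u hu => hz u fun hus =>
    hs hv hus (G.ne_of_adj ((mem_neighborFinset ..).1 hu)) ((mem_neighborFinset ..).1 hu), sub_zero]

lemma lapMatrix_mulVec_apply_of_notMem (hz : ∀ v ∉ s, z v = 0) (hv : v ∉ s) :
    (G.lapMatrix ℝ *ᵥ z) v = -∑ u ∈ G.neighborFinset v ∩ s, z u := by
  rw [lapMatrix_mulVec_apply, hz v hv, mul_zero, zero_sub,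
    sum_subset inter_subset_left fun u hu hus => hz u fun h => hus (mem_inter.2 ⟨hu, h⟩)]

lemma degree_eq_of_lapMatrix_mulVec_eq_smul (hs : G.IsIndepSet s) {μ : ℝ}
    (hLz : G.lapMatrix ℝ *ᵥ z = μ • z) (hz : ∀ v ∉ s, z v = 0) (hv : v ∈ s) (hzv : z v ≠ 0) :
    (G.degree v : ℝ) = μ := by
  have hrow := congrFun hLz v
  rw [lapMatrix_mulVec_apply_of_isIndepSet hs hz hv, Pi.smul_apply, smul_eq_mul] at hrow
  exact mul_right_cancel₀ hzv hrow

lemma lapMatrix_mulVec_eq_smul_of_isIndepSet (hs : G.IsIndepSet s) {d : ℕ}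
    (hdeg : ∀ v ∈ s, G.degree v = d) (hz : ∀ v ∉ s, z v = 0)
    (hC : ∀ c ∈ G.outerBoundary s, (G.lapMatrix ℝ *ᵥ z) c = 0) :
    G.lapMatrix ℝ *ᵥ z = (d : ℝ) • z := by
  funext v
  rw [Pi.smul_apply, smul_eq_mul]
  by_cases hv : v ∈ s
  · rw [lapMatrix_mulVec_apply_of_isIndepSet hs hz hv, hdeg v hv]
  by_cases hc : v ∈ G.outerBoundary s
  · rw [hC v hc, hz v hv, mul_zero]
  · rw [lapMatrix_mulVec_apply_of_notMem hz hv, hz v hv, mul_zero, neg_eq_zero]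
    refine sum_eq_zero fun u hu => absurd ?_ hc
    rw [mem_inter, mem_neighborFinset] at hu
    exact mem_outerBoundary.2 ⟨hv, u, hu.2, hu.1⟩

lemma exists_ne_zero_lapMatrix_mulVec_eq_zero_on_outerBoundary
    (hlt : #(G.outerBoundary s) + 1 < #s) (v₀ : V) :
    ∃ z : V → ℝ, z ≠ 0 ∧ (∀ v ∉ s, z v = 0) ∧ z v₀ = 0 ∧
      ∀ c ∈ G.outerBoundary s, (G.lapMatrix ℝ *ᵥ z) c = 0 := by
  let φ : (V → ℝ) →ₗ[ℝ] ((↥sᶜ → ℝ) × (↥(G.outerBoundary s) → ℝ)) × ℝ :=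
    ((LinearMap.funLeft ℝ ℝ Subtype.val).prod
      (LinearMap.funLeft ℝ ℝ Subtype.val ∘ₗ (G.lapMatrix ℝ).mulVecLin)).prod
      (LinearMap.proj v₀)
  have hrank : Module.finrank ℝ (((↥sᶜ → ℝ) × (↥(G.outerBoundary s) → ℝ)) × ℝ) <
      Module.finrank ℝ (V → ℝ) := by
    simp only [Module.finrank_prod, Module.finrank_fintype_fun_eq_card, Fintype.card_coe,
      card_compl, Module.finrank_self]
    have := card_le_univ s
    omega
  obtain ⟨z, hz, hz0⟩ := Submodule.exists_mem_ne_zero_of_ne_bot (φ.ker_ne_bot_of_finrank_lt hrank)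
  simp only [φ, LinearMap.ker_prod, Submodule.mem_inf, LinearMap.mem_ker, funext_iff,
    LinearMap.funLeft_apply, Pi.zero_apply, Subtype.forall, mem_compl, LinearMap.coe_comp,
    Function.comp_apply, mulVecBilin_apply, LinearMap.coe_proj, Function.eval] at hz
  exact ⟨z, hz0, hz.1.1, hz.2, hz.1.2⟩

end SimpleGraph

open SimpleGraph

section

variable {V : Type*} [Fintype V] [DecidableEq V] {G : SimpleGraph V} {s : Finset V}
  {z : V → ℝ} {v : V}

lemma IsPerfectCriticalSet.degree_eq_degree (h : IsPerfectCriticalSet G s)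
    (hs : G.IsIndepSet s) {u v : V} (hu : u ∈ s) (hv : v ∈ s) : G.degree u = G.degree v := by
  obtain ⟨-, μ, y, -, hLy, hout, hin⟩ := h
  exact_mod_cast (degree_eq_of_lapMatrix_mulVec_eq_smul hs hLy hout hu (hin u hu)).trans
    (degree_eq_of_lapMatrix_mulVec_eq_smul hs hLy hout hv (hin v hv)).symm

lemma IsPerfectCriticalSet.two_le_card_neighborFinset_inter (h : IsPerfectCriticalSet G s)
    {c : V} (hc : c ∈ G.outerBoundary s) : 2 ≤ #(G.neighborFinset c ∩ s) := by
  obtain ⟨-, μ, y, -, hLy, hout, hin⟩ := h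
  obtain ⟨hcs, u, hu, hcu⟩ := mem_outerBoundary.1 hc
  have hsum : ∑ u ∈ G.neighborFinset c ∩ s, y u = 0 := by
    have hrow := congrFun hLy c
    rwa [lapMatrix_mulVec_apply_of_notMem hout hcs, Pi.smul_apply, hout c hcs, smul_zero,
      neg_eq_zero] at hrow
  have hpos : 0 < #(G.neighborFinset c ∩ s) := card_pos.2 ⟨u, by simp [hu, hcu]⟩
  by_contra! hlt
  obtain ⟨w, hw⟩ := card_eq_one.1 (show #(G.neighborFinset c ∩ s) = 1 by omega)
  rw [hw, sum_singleton] at hsum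
  exact hin w (mem_inter.1 (hw ▸ mem_singleton_self w)).2 hsum

lemma IsMinimalPerfectCriticalSet.apply_ne_zero {S : Set V} (h : IsMinimalPerfectCriticalSet G S)
    {μ : ℝ} (hz : z ≠ 0) (hLz : G.lapMatrix ℝ *ᵥ z = μ • z) (hzS : ∀ v ∉ S, z v = 0)
    (hv : v ∈ S) : z v ≠ 0 := by
  have hpcs : IsPerfectCriticalSet G (Function.support z) :=
    ⟨Function.support_nonempty_iff.2 hz, μ, z, hz, hLz, fun _ => Function.notMem_support.1,
      fun _ => id⟩
  refine fun hzv => h.2 _ ⟨fun u hu => ?_, fun hS => Function.mem_support.1 (hS hv) hzv⟩ hpcs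
  exact by_contra fun huS => Function.mem_support.1 hu (hzS u huS)

lemma IsMinimalPerfectCriticalSet.card_le_card_outerBoundary_add_one
    (h : IsMinimalPerfectCriticalSet G s) (hs : G.IsIndepSet s) {d : ℕ}
    (hdeg : ∀ v ∈ s, G.degree v = d) : #s ≤ #(G.outerBoundary s) + 1 := by
  obtain ⟨v₀, hv₀⟩ := h.1.1
  by_contra! hlt
  obtain ⟨z, hz, hzs, hzv₀, hC⟩ := exists_ne_zero_lapMatrix_mulVec_eq_zero_on_outerBoundary hlt v₀
  exact h.apply_ne_zero hz (lapMatrix_mulVec_eq_smul_of_isIndepSet hs hdeg hzs hC) hzs hv₀ hzv₀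

theorem IsMinimalPerfectCriticalSet.card_eq_two (hG : G.IsAcyclic) (hs : G.IsIndepSet s)
    (hiso : ∀ v ∈ s, ¬ G.IsIsolated v) (h : IsMinimalPerfectCriticalSet G s) : #s = 2 := by
  obtain ⟨v₀, hv₀⟩ := h.1.1
  have hdeg : ∀ v ∈ s, G.degree v = G.degree v₀ := fun v hv => h.1.degree_eq_degree hs hv hv₀
  have hd : 0 < G.degree v₀ := (G.degree_pos v₀).2 (hiso v₀ hv₀)
  have hk := h.card_le_card_outerBoundary_add_one hs hdeg
  have hsum : #s * G.degree v₀ = ∑ c ∈ G.outerBoundary s, #(G.neighborFinset c ∩ s) := by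
    rw [← hs.sum_degree_eq_sum_card_neighborFinset_inter, sum_congr rfl hdeg, sum_const,
      smul_eq_mul]
  have htwo : #(G.outerBoundary s) * 2 ≤ #s * G.degree v₀ :=
    hsum ▸ card_nsmul_le_sum _ _ _ fun c hc => h.1.two_le_card_neighborFinset_inter hc
  have hlt := hs.sum_degree_lt_card_add_card_outerBoundary hG ⟨v₀, hv₀⟩
  rw [sum_congr rfl hdeg, sum_const, smul_eq_mul] at hlt
  obtain hd1 | hd2 : G.degree v₀ = 1 ∨ 2 ≤ G.degree v₀ := by omega
  · rw [hd1] at htwo hlt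
    omega
  · have := Nat.mul_le_mul_left #s hd2
    omega

lemma not_isPerfectCriticalSet_singleton {a : V} (ha : ¬ G.IsIsolated a) :
    ¬ IsPerfectCriticalSet G {a} := by
  rintro ⟨-, μ, y, -, hLy, hout, hin⟩
  obtain ⟨u, hau⟩ := exists_adj_iff_not_isIsolated.2 ha
  have hu : u ∉ ({a} : Finset V) := by simpa using hau.ne'
  have hrow := congrFun hLy u
  rw [lapMatrix_mulVec_apply_of_notMem (fun v hv => hout v (by simpa using hv)) hu,
    inter_singleton_of_mem (by simpa using hau.symm), sum_singleton, Pi.smul_apply,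
    hout u (by simpa using hu), smul_zero, neg_eq_zero] at hrow
  exact hin a rfl hrow

lemma isPerfectCriticalSet_pair {a b : V} (hab : a ≠ b)
    (h : G.neighborFinset a = G.neighborFinset b) : IsPerfectCriticalSet G {a, b} := by
  have hdeg : G.degree a = G.degree b := by
    rw [← card_neighborFinset_eq_degree, h, card_neighborFinset_eq_degree]
  have hadj (v : V) : G.Adj v a ↔ G.Adj v b := by
    rw [adj_comm, ← mem_neighborFinset, h, mem_neighborFinset, adj_comm]
  refine ⟨Set.insert_nonempty a {b}, G.degree a, Pi.single a 1 - Pi.single b 1, ?_, ?_, ?_, ?_⟩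
  · intro h0
    simpa [hab] using congrFun h0 a
  · funext v
    simp only [lapMatrix_mulVec_apply, Pi.sub_apply, sum_sub_distrib, sum_pi_single',
      mem_neighborFinset, hadj, sub_self, sub_zero, Pi.smul_apply, smul_eq_mul]
    by_cases hva : v = a
    · rw [hva]
    by_cases hvb : v = b
    · rw [hvb, hdeg]
    simp [hva, hvb]
  · intro v hv
    simp_all
  · rintro v (rfl | rfl) <;> simp [hab, hab.symm]

lemma isMinimalPerfectCriticalSet_pair {a b : V} (hab : a ≠ b)
    (h : G.neighborFinset a = G.neighborFinset b) (ha : ¬ G.IsIsolated a) :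
    IsMinimalPerfectCriticalSet G {a, b} := by
  have hb : ¬ G.IsIsolated b := fun hb =>
    ha fun w hw => hb w (by rwa [← mem_neighborFinset, ← h, mem_neighborFinset])
  refine ⟨isPerfectCriticalSet_pair hab h, fun T hT hTpcs => ?_⟩
  rcases hTpcs.1.subset_pair_iff_eq.1 hT.subset with rfl | rfl | rfl
  · exact not_isPerfectCriticalSet_singleton ha hTpcs
  · exact not_isPerfectCriticalSet_singleton hb hTpcs
  · exact hT.ne rfl

end

/-- For a tree, an independent set `S` is a minimal perfect critical set if and only if
`|S| = 2` and every vertex outside `S` is adjacent either to no vertex of `S` or to every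
vertex of `S` (the two vertices of `S` are twins). -/
theorem independent_mpcs_iff_twins {V : Type*} [Fintype V] [DecidableEq V]
    (G : SimpleGraph V) (hG : G.IsTree) (hcard : 2 ≤ Fintype.card V)
    (S : Set V) (hind : ∀ u ∈ S, ∀ w ∈ S, ¬ G.Adj u w) :
    IsMinimalPerfectCriticalSet G S ↔
      S.ncard = 2 ∧ ∀ v ∉ S, (∀ u ∈ S, ¬ G.Adj v u) ∨ (∀ u ∈ S, G.Adj v u) := by
  lift S to Finset V using S.toFinite
  have hs : G.IsIndepSet S := fun u hu w hw _ => hind u hu w hw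
  have : Nontrivial V := Fintype.one_lt_card_iff_nontrivial.1 hcard
  have hiso (v : V) : ¬ G.IsIsolated v :=
    exists_adj_iff_not_isIsolated.1 (hG.connected.preconnected.exists_adj_of_nontrivial v)
  rw [Set.ncard_coe_finset]
  constructor
  · intro h
    have h2 := h.card_eq_two hG.isAcyclic hs fun v _ => hiso v
    refine ⟨h2, fun v hv => or_iff_not_imp_left.2 fun hadj => ?_⟩
    push Not at hadj
    have hsub : S ⊆ G.neighborFinset v := inter_eq_right.1 <|
      eq_of_subset_of_card_le inter_subset_right
        (h2 ▸ h.1.two_le_card_neighborFinset_inter (mem_outerBoundary.2 ⟨hv, hadj⟩))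
    exact fun u hu => (mem_neighborFinset ..).1 (hsub hu)
  · rintro ⟨h2, htwin⟩
    obtain ⟨a, b, hab, rfl⟩ := card_eq_two.1 h2
    rw [coe_pair]
    refine isMinimalPerfectCriticalSet_pair hab ?_ (hiso a)
    ext v
    simp only [mem_neighborFinset]
    by_cases hv : v ∈ ({a, b} : Finset V)
    · have := hind a (by simp) v hv
      have := hind b (by simp) v hv
      tauto
    · rcases htwin v hv with h | h
      · exact iff_of_false (fun h' => h a (by simp) h'.symm) (fun h' => h b (by simp) h'.symm)
      · exact iff_of_true (h a (by simp)).symm (h b (by simp)).symm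
end

section
/- Let G be a tree with at least two vertices and let S be a minimal perfect critical set of G. Suppose there exists a vertex v0 ∈ S with deg_G(v0) = 1 that has no neighbor in S. Then for every pendant vertex v of G (deg_G(v) = 1), the unique neighbor u of v satisfies u ∉ S. -/
open Matrix
open scoped Classical

/-- At a pendant vertex `v` with neighbor `u`, the Laplacian acts as `y v - y u`. -/
lemma lap_pendant {V : Type*} [Fintype V] [DecidableEq V] (G : SimpleGraph V)
    (v u : V) (hdeg : G.degree v = 1) (hadj : G.Adj v u) (y : V → ℝ) :
    (G.lapMatrix ℝ *ᵥ y) v = y v - y u := by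
  have hcard : (G.neighborFinset v).card = 1 := by
    rwa [SimpleGraph.card_neighborFinset_eq_degree]
  obtain ⟨a, ha⟩ := Finset.card_eq_one.mp hcard
  have hu : u ∈ G.neighborFinset v := by
    rw [SimpleGraph.mem_neighborFinset]; exact hadj
  rw [ha, Finset.mem_singleton] at hu
  subst hu
  rw [SimpleGraph.lapMatrix_mulVec_apply, hdeg, ha, Finset.sum_singleton]
  push_cast; ring

/-- Proposition: let `S` be a minimal perfect critical set of a tree `G` containing a pendant
vertex `v0` with no neighbor in `S`. Then the neighbor of every pendant vertex of `G` lies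
outside `S`. -/
theorem mpcs_pendant_neighbors_outside
    {V : Type*} [Fintype V] [DecidableEq V]
    (G : SimpleGraph V) (hG : G.IsTree) (hcard : 2 ≤ Fintype.card V)
    (S : Set V) (hS : IsMinimalPerfectCriticalSet G S)
    (v0 : V) (hv0S : v0 ∈ S) (hv0deg : G.degree v0 = 1)
    (hv0iso : ∀ u ∈ S, ¬ G.Adj v0 u) :
    ∀ v : V, G.degree v = 1 → ∀ u : V, G.Adj v u → u ∉ S := by
  obtain ⟨⟨_, lam, y, hy0, heig, hvan, hnz⟩, _⟩ := hS
  -- neighbor of v0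
  have hcard0 : (G.neighborFinset v0).card = 1 := by
    rwa [SimpleGraph.card_neighborFinset_eq_degree]
  obtain ⟨u0, hu0⟩ := Finset.card_eq_one.mp hcard0
  have hadj0 : G.Adj v0 u0 := by
    have : u0 ∈ G.neighborFinset v0 := by rw [hu0]; exact Finset.mem_singleton_self u0
    rwa [SimpleGraph.mem_neighborFinset] at this
  have hu0S : u0 ∉ S := fun h => hv0iso u0 h hadj0
  have hy_u0 : y u0 = 0 := hvan u0 hu0S
  have h0 : y v0 - y u0 = lam * y v0 := by
    have := congrFun heig v0
    rw [lap_pendant G v0 u0 hv0deg hadj0] at this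
    simpa using this
  have hlam : lam = 1 := by
    rw [hy_u0, sub_zero] at h0
    have hv0 := hnz v0 hv0S
    have h2 : lam * y v0 = 1 * y v0 := by rw [one_mul]; exact h0.symm
    exact mul_right_cancel₀ hv0 h2
  intro v hv u hadj huS
  have h1 : y v - y u = lam * y v := by
    have := congrFun heig v
    rw [lap_pendant G v u hv hadj] at this
    simpa using this
  rw [hlam, one_mul] at h1
  have : y u = 0 := by linarith
  exact hnz u huS this
end

section
/- Let G be a tree on n vertices with Laplacian matrix A ∈ ℝ^{n×n}. Let c ∈ ℝ^n with c_i ∈ {−1, 0} for every i, and let B = A + diag(c_1, …, c_n). Then there exists a vector x ∈ ℝ^n with x_i ≠ 0 for every i and B x = 0 if and only if c_1 = c_2 = ⋯ = c_n = 0. -/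
open Matrix
open scoped Classical

namespace TreePerturbAux

variable {V : Type*} [Fintype V] [DecidableEq V]

/-- In an acyclic graph, every nonempty finite vertex set contains a vertex with at most one
neighbor inside the set. -/
lemma exists_quasi_leaf (G : SimpleGraph V) (hac : G.IsAcyclic) (T : Finset V)
    (hT : T.Nonempty) : ∃ t ∈ T, (T.filter (G.Adj t)).card ≤ 1 := by
  classical
  obtain ⟨t₀, ht₀⟩ := hT
  set P : ℕ → Prop := fun n => ∃ (u v : V) (p : G.Walk u v), p.IsPath ∧
    (∀ z ∈ p.support, z ∈ T) ∧ p.length = n with hP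
  have hP0 : P 0 := ⟨t₀, t₀, SimpleGraph.Walk.nil, SimpleGraph.Walk.IsPath.nil, by
    intro z hz; simp only [SimpleGraph.Walk.support_nil, List.mem_singleton] at hz
    exact hz ▸ ht₀, rfl⟩
  obtain ⟨u, v, p, hp, hsup, hlen⟩ : P (Nat.findGreatest P (Fintype.card V)) :=
    Nat.findGreatest_spec (Nat.zero_le _) hP0
  refine ⟨u, hsup u p.start_mem_support, ?_⟩
  have key : ∀ z ∈ T.filter (G.Adj u), z = p.getVert 1 := by
    intro z hz
    rw [Finset.mem_filter] at hz
    obtain ⟨hzT, h⟩ := hz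
    have hzsup : z ∈ p.support := by
      by_contra hzs
      have hp' : (SimpleGraph.Walk.cons h.symm p).IsPath := hp.cons hzs
      have hle : p.length + 1 ≤ Nat.findGreatest P (Fintype.card V) := by
        refine Nat.le_findGreatest hp'.length_lt.le ⟨z, v, _, hp', ?_, rfl⟩
        intro w hw
        simp only [SimpleGraph.Walk.support_cons, List.mem_cons] at hw
        rcases hw with rfl | hw
        · exact hzT
        · exact hsup w hw
      omega
    have hq : (p.takeUntil z hzsup).IsPath := hp.takeUntil hzsup
    have hsingle : p.takeUntil z hzsup = SimpleGraph.Walk.cons h SimpleGraph.Walk.nil := by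
      have := hac.path_unique ⟨p.takeUntil z hzsup, hq⟩ (SimpleGraph.Path.singleton h)
      simpa [SimpleGraph.Path.singleton] using congrArg Subtype.val this
    have hps : p = SimpleGraph.Walk.cons h (p.dropUntil z hzsup) := by
      conv_lhs => rw [← p.take_spec hzsup]
      rw [hsingle]
      simp
    rw [hps]
    simp [SimpleGraph.Walk.getVert_cons_succ, SimpleGraph.Walk.getVert_zero]
  calc (T.filter (G.Adj u)).card ≤ ({p.getVert 1} : Finset V).card :=
        Finset.card_le_card (fun z hz => by simpa using key z hz)
    _ = 1 := Finset.card_singleton _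

/-- The leaf-peeling induction: in an acyclic graph, if `x` is nowhere zero on `T` and satisfies
the perturbed harmonicity equations relative to `T`, then `c` vanishes on `T`. -/
lemma peel (G : SimpleGraph V) (hac : G.IsAcyclic) :
    ∀ (n : ℕ) (T : Finset V), T.card ≤ n → ∀ (c x : V → ℝ),
    (∀ i ∈ T, c i = -1 ∨ c i = 0) → (∀ i ∈ T, x i ≠ 0) →
    (∀ i ∈ T, (((T.filter (G.Adj i)).card : ℝ) + c i) * x i = ∑ j ∈ T.filter (G.Adj i), x j) →
    ∀ i ∈ T, c i = 0 := by
  intro n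
  induction n with
  | zero =>
    intro T hT c x _ _ _ i hi
    rw [Nat.le_zero, Finset.card_eq_zero] at hT
    simp [hT] at hi
  | succ n IH =>
    intro T hT c x hc hx heq i hi
    obtain ⟨t, htT, hleaf⟩ := exists_quasi_leaf G hac T ⟨i, hi⟩
    interval_cases hcard : (T.filter (G.Adj t)).card
    · -- degree 0 within T
      have hfe : T.filter (G.Adj t) = ∅ := Finset.card_eq_zero.mp hcard
      have hct : c t = 0 := by
        have := heq t htT
        rw [hfe] at this
        simp at this
        rcases this with h0 | h0
        · exact h0
        · exact absurd h0 (hx t htT)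
      have hnadj : ∀ j ∈ T, ¬ G.Adj j t := by
        intro j hj hadj
        have : j ∈ T.filter (G.Adj t) := Finset.mem_filter.mpr ⟨hj, hadj.symm⟩
        simp [hfe] at this
      rcases eq_or_ne i t with rfl | hit
      · exact hct
      have hiT' : i ∈ T.erase t := Finset.mem_erase.mpr ⟨hit, hi⟩
      refine IH (T.erase t) ?_ c x (fun j hj => hc j (Finset.mem_of_mem_erase hj))
        (fun j hj => hx j (Finset.mem_of_mem_erase hj)) ?_ i hiT'
      · have := Finset.card_erase_add_one htT
        omega
      · intro j hj
        have hjT := Finset.mem_of_mem_erase hj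
        have hset : (T.erase t).filter (G.Adj j) = T.filter (G.Adj j) := by
          ext z
          simp only [Finset.mem_filter, Finset.mem_erase]
          constructor
          · rintro ⟨⟨-, hz⟩, ha⟩; exact ⟨hz, ha⟩
          · rintro ⟨hz, ha⟩
            refine ⟨⟨?_, hz⟩, ha⟩
            rintro rfl
            exact hnadj j hjT ha
        rw [hset]
        exact heq j hjT
    · -- degree 1 within T
      obtain ⟨u, hfu⟩ := Finset.card_eq_one.mp hcard
      have huT : u ∈ T ∧ G.Adj t u := by
        have : u ∈ T.filter (G.Adj t) := by rw [hfu]; exact Finset.mem_singleton_self u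
        exact Finset.mem_filter.mp this
      have heqt := heq t htT
      rw [hcard, hfu, Finset.sum_singleton] at heqt
      have hct : c t = 0 := by
        rcases hc t htT with h | h
        · exfalso
          rw [h] at heqt
          simp at heqt
          exact hx u huT.1 heqt.symm
        · exact h
      have hxt : x t = x u := by
        rw [hct] at heqt
        simpa using heqt
      rcases eq_or_ne i t with rfl | hit
      · exact hct
      have hiT' : i ∈ T.erase t := Finset.mem_erase.mpr ⟨hit, hi⟩
      refine IH (T.erase t) ?_ c x (fun j hj => hc j (Finset.mem_of_mem_erase hj))
        (fun j hj => hx j (Finset.mem_of_mem_erase hj)) ?_ i hiT'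
      · have := Finset.card_erase_add_one htT
        omega
      · intro j hj
        obtain ⟨hjt, hjT⟩ := Finset.mem_erase.mp hj
        have herase : (T.erase t).filter (G.Adj j) = (T.filter (G.Adj j)).erase t := by
          ext z
          simp only [Finset.mem_filter, Finset.mem_erase]
          tauto
        by_cases hadj : G.Adj j t
        · have : j ∈ T.filter (G.Adj t) := Finset.mem_filter.mpr ⟨hjT, hadj.symm⟩
          rw [hfu, Finset.mem_singleton] at this
          subst this
          have htF : t ∈ T.filter (G.Adj j) := Finset.mem_filter.mpr ⟨htT, hadj⟩
          have hcardF : ((T.filter (G.Adj j)).card : ℝ)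
              = ((T.filter (G.Adj j)).erase t).card + 1 := by
            have := Finset.card_erase_add_one htF
            push_cast [← this]
            ring
          have hsumF : ∑ z ∈ T.filter (G.Adj j), x z
              = x t + ∑ z ∈ (T.filter (G.Adj j)).erase t, x z :=
            (Finset.add_sum_erase _ _ htF).symm
          have := heq j hjT
          rw [hcardF, hsumF, hxt] at this
          rw [herase]
          linarith
        · have hset : (T.erase t).filter (G.Adj j) = T.filter (G.Adj j) := by
            rw [herase]
            apply Finset.erase_eq_of_notMem
            simp [hadj]
          rw [hset]
          exact heq j hjT

end TreePerturbAux

/-- Lemma: let `A` be the Laplacian matrix of a tree and `B = A + diag(c)` with each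
`cᵢ ∈ {-1, 0}`. Then `B x = 0` has a solution `x` that is nonzero in every coordinate if and
only if all the `cᵢ` vanish. -/
theorem tree_laplacian_diagonal_perturbation_kernel
    {V : Type*} [Fintype V] [DecidableEq V]
    (G : SimpleGraph V) (hG : G.IsTree) (c : V → ℝ)
    (hc : ∀ i, c i = -1 ∨ c i = 0) :
    (∃ x : V → ℝ, (∀ i, x i ≠ 0) ∧ (G.lapMatrix ℝ + Matrix.diagonal c) *ᵥ x = 0) ↔
      ∀ i, c i = 0 := by
  constructor
  · rintro ⟨x, hx, hBx⟩ i
    have key : ∀ i, (((Finset.univ.filter (G.Adj i)).card : ℝ) + c i) * x i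
        = ∑ j ∈ Finset.univ.filter (G.Adj i), x j := by
      intro i
      have h0 : ((G.lapMatrix ℝ + Matrix.diagonal c) *ᵥ x) i = 0 := by rw [hBx]; rfl
      rw [add_mulVec, Pi.add_apply, mulVec_diagonal,
        SimpleGraph.lapMatrix_mulVec_apply] at h0
      have hnb : G.neighborFinset i = Finset.univ.filter (G.Adj i) := by
        ext z
        simp [SimpleGraph.mem_neighborFinset]
      have hdeg : (G.degree i : ℝ) = ((Finset.univ.filter (G.Adj i)).card : ℝ) := by
        rw [SimpleGraph.degree, hnb]
      rw [hnb, hdeg] at h0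
      linarith
    exact TreePerturbAux.peel G hG.IsAcyclic (Finset.univ.card) Finset.univ le_rfl c x
      (fun j _ => hc j) (fun j _ => hx j) (fun j _ => key j) i (Finset.mem_univ i)
  · intro h
    refine ⟨fun _ => 1, fun _ => one_ne_zero, ?_⟩
    have hc0 : Matrix.diagonal c = 0 := by
      ext i j
      by_cases hij : i = j <;> simp [Matrix.diagonal, hij, h]
    rw [hc0, add_zero]
    exact G.lapMatrix_mulVec_const_eq_zero
end

section
/- Let G be a finite simple undirected graph on a nonempty vertex set V and let F ⊆ V. Then the following are equivalent: (i) for every λ ∈ ℝ and every nonzero real vector y with L y = λ y, there exists a vertex v ∈ V∖F with y_v ≠ 0; (ii) every minimal perfect critical set S of G satisfies S ∩ (V∖F) ≠ ∅. (Equivalently, by the eigenvector criterion for controllability, G is controllable under the leader set V∖F if and only if every MPCS meets V∖F.) -/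
open Matrix
open scoped Classical

/-- Remark 1 (eigenvector criterion restated via MPCS): every eigenvector of the Laplacian of
`G` is nonzero at some vertex outside `F` if and only if every minimal perfect critical set of
`G` meets `V \ F`. -/
theorem controllable_iff_every_mpcs_meets_leaders
    {V : Type*} [Fintype V] [DecidableEq V] [Nonempty V]
    (G : SimpleGraph V) (F : Set V) :
    (∀ (lam : ℝ) (y : V → ℝ), y ≠ 0 → G.lapMatrix ℝ *ᵥ y = lam • y →
        ∃ v ∉ F, y v ≠ 0) ↔
      ∀ S : Set V, IsMinimalPerfectCriticalSet G S → (S ∩ Fᶜ).Nonempty := by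
  have exists_mpcs : ∀ n : ℕ, ∀ S : Set V, S.ncard ≤ n → IsPerfectCriticalSet G S →
      ∃ T ⊆ S, IsMinimalPerfectCriticalSet G T := by
    intro n
    induction n with
    | zero =>
      intro S hle hS
      rcases hS.1 with ⟨v, hv⟩
      have : 0 < S.ncard := (Set.ncard_pos (Set.toFinite S)).mpr ⟨v, hv⟩
      omega
    | succ n ih =>
      intro S hle hS
      by_cases hmin : ∀ T : Set V, T ⊂ S → ¬ IsPerfectCriticalSet G T
      · exact ⟨S, subset_rfl, hS, hmin⟩
      · push_neg at hmin
        rcases hmin with ⟨T, hTS, hT⟩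
        have hlt : T.ncard < S.ncard :=
          Set.ncard_lt_ncard hTS (Set.toFinite S)
        rcases ih T (by omega) hT with ⟨U, hUT, hU⟩
        exact ⟨U, hUT.trans hTS.subset, hU⟩
  constructor
  · intro h S hS
    rcases hS.1 with ⟨_, ⟨lam, y, hy, hey, hout, hin⟩⟩
    rcases h lam y hy hey with ⟨v, hvF, hvy⟩
    have hvS : v ∈ S := by
      by_contra hvS
      exact hvy (hout v hvS)
    exact ⟨v, hvS, hvF⟩
  · intro h lam y hy hey
    set S : Set V := {v | y v ≠ 0} with hSdef
    have hSpcs : IsPerfectCriticalSet G S := by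
      refine ⟨?_, lam, y, hy, hey, ?_, ?_⟩
      · rcases Function.ne_iff.mp hy with ⟨v, hv⟩
        exact ⟨v, hv⟩
      · intro v hv
        simpa [hSdef] using hv
      · intro v hv
        exact hv
    rcases exists_mpcs S.ncard S le_rfl hSpcs with ⟨T, hTS, hT⟩
    rcases h T hT with ⟨v, hvT, hvF⟩
    exact ⟨v, hvF, hTS hvT⟩
end

section
/- Let G be a finite simple undirected graph, S ⊆ V nonempty, and let v ∉ S be a vertex with N_S(v) = ∅ (v has no neighbor in S). Let G − v denote the induced subgraph of G on V∖{v}. Then for every λ ∈ ℝ: there exists a nonzero vector y with L(G) y = λ y and y_u = 0 for all u ∉ S if and only if there exists a nonzero vector z with L(G−v) z = λ z and z_u = 0 for all u ∈ (V∖{v})∖S. In particular, S is a critical set of G (with inducing eigenvalue λ) if and only if S is a critical set of G − v (with inducing eigenvalue λ), and the same equivalence holds with 'perfect critical set' in place of 'critical set'. -/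
open Matrix
open scoped Classical

section Aux
open Finset

variable {V : Type*} [Fintype V] [DecidableEq V] (G : SimpleGraph V)

lemma sum_compl_single (v : V) (g : V → ℝ) (hg : g v = 0) :
    ∑ w : ({v}ᶜ : Set V), g w = ∑ w, g w := by
  rw [Finset.sum_set_coe]
  rw [show ({v}ᶜ : Set V).toFinset = Finset.univ.erase v by
    ext w; simp [Finset.mem_erase]]
  exact Finset.sum_erase _ hg

lemma lap_induce_eq (v : V) (y : V → ℝ) (hyv : y v = 0)
    (hadj : ∀ u, G.Adj u v → y u = 0) (u : ({v}ᶜ : Set V)) :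
    ((G.induce ({v}ᶜ : Set V)).lapMatrix ℝ *ᵥ (fun w => y w)) u
      = (G.lapMatrix ℝ *ᵥ y) u := by
  rw [SimpleGraph.lapMatrix_mulVec_apply, SimpleGraph.lapMatrix_mulVec_apply]
  have hsum : ∑ w ∈ (G.induce ({v}ᶜ : Set V)).neighborFinset u, y w
      = ∑ w ∈ G.neighborFinset (u : V), y w := by
    rw [SimpleGraph.neighborFinset_eq_filter, SimpleGraph.neighborFinset_eq_filter,
      Finset.sum_filter, Finset.sum_filter]
    rw [show (fun w : ({v}ᶜ : Set V) => if (G.induce ({v}ᶜ : Set V)).Adj u w then y ↑w else 0)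
        = fun w : ({v}ᶜ : Set V) => (fun x : V => if G.Adj ↑u x then y x else 0) ↑w by
      funext w; simp [SimpleGraph.comap_adj]]
    exact sum_compl_single v (fun x : V => if G.Adj ↑u x then y x else 0) (by by_cases h : G.Adj ↑u v <;> simp [h, hyv])
  rw [hsum]
  congr 1
  by_cases hy : y (u : V) = 0
  · simp [hy]
  · have huv : ¬ G.Adj (u : V) v := fun h => hy (hadj _ h)
    have hdeg : (G.induce ({v}ᶜ : Set V)).degree u = G.degree (u : V) := by
      rw [SimpleGraph.degree, SimpleGraph.degree, SimpleGraph.neighborFinset_eq_filter,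
        SimpleGraph.neighborFinset_eq_filter, Finset.card_filter, Finset.card_filter]
      rw [show (fun w : ({v}ᶜ : Set V) => if (G.induce ({v}ᶜ : Set V)).Adj u w then 1 else 0)
          = fun w : ({v}ᶜ : Set V) => (fun x : V => if G.Adj ↑u x then (1:ℕ) else 0) ↑w by
        funext w; simp [SimpleGraph.comap_adj]]
      have := sum_compl_single (g := fun x : V => ((if G.Adj ↑u x then (1:ℕ) else 0) : ℝ)) v (by simp [huv])
      exact_mod_cast this
    rw [hdeg]

lemma lap_apply_v (v : V) (y : V → ℝ) (hyv : y v = 0)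
    (hadj : ∀ u, G.Adj v u → y u = 0) :
    (G.lapMatrix ℝ *ᵥ y) v = 0 := by
  rw [SimpleGraph.lapMatrix_mulVec_apply, hyv]
  simp only [mul_zero, zero_sub, neg_eq_zero]
  exact Finset.sum_eq_zero fun w hw => hadj w (by simpa using hw)

theorem critical_set_delete_nonneighbor'
    (S : Set V) (hSne : S.Nonempty)
    (v : V) (hv : v ∉ S) (hnadj : ∀ u ∈ S, ¬ G.Adj v u) (lam : ℝ) :
    ((∃ y : V → ℝ, y ≠ 0 ∧ G.lapMatrix ℝ *ᵥ y = lam • y ∧ ∀ u ∉ S, y u = 0) ↔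
      (∃ z : ({v}ᶜ : Set V) → ℝ, z ≠ 0 ∧
        (G.induce ({v}ᶜ : Set V)).lapMatrix ℝ *ᵥ z = lam • z ∧
        ∀ u : ({v}ᶜ : Set V), (u : V) ∉ S → z u = 0)) ∧
    ((∃ y : V → ℝ, y ≠ 0 ∧ G.lapMatrix ℝ *ᵥ y = lam • y ∧ (∀ u ∉ S, y u = 0) ∧
        ∀ u ∈ S, y u ≠ 0) ↔
      (∃ z : ({v}ᶜ : Set V) → ℝ, z ≠ 0 ∧
        (G.induce ({v}ᶜ : Set V)).lapMatrix ℝ *ᵥ z = lam • z ∧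
        (∀ u : ({v}ᶜ : Set V), (u : V) ∉ S → z u = 0) ∧
        ∀ u : ({v}ᶜ : Set V), (u : V) ∈ S → z u ≠ 0)) := by
  -- forward direction data
  have fwd : ∀ y : V → ℝ, y ≠ 0 → G.lapMatrix ℝ *ᵥ y = lam • y → (∀ u ∉ S, y u = 0) →
      ∃ z : ({v}ᶜ : Set V) → ℝ, z ≠ 0 ∧
        (G.induce ({v}ᶜ : Set V)).lapMatrix ℝ *ᵥ z = lam • z ∧
        (∀ u : ({v}ᶜ : Set V), z u = y (u : V)) := by
    intro y hy0 heig hsupp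
    have hyv : y v = 0 := hsupp v hv
    have hadj : ∀ u, G.Adj u v → y u = 0 := by
      intro u hu
      by_contra h
      exact hnadj u (by by_contra hs; exact h (hsupp u hs)) hu.symm
    refine ⟨fun w => y w, ?_, ?_, fun u => rfl⟩
    · intro h
      apply hy0
      funext w
      by_cases hw : w = v
      · simpa [hw] using hyv
      · exact congrFun h ⟨w, by simp [hw]⟩
    · funext u
      rw [lap_induce_eq G v y hyv hadj u, congrFun heig (u : V)]
      simp
  have bwd : ∀ z : ({v}ᶜ : Set V) → ℝ, z ≠ 0 →
      (G.induce ({v}ᶜ : Set V)).lapMatrix ℝ *ᵥ z = lam • z →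
      (∀ u : ({v}ᶜ : Set V), (u : V) ∉ S → z u = 0) →
      ∃ y : V → ℝ, y ≠ 0 ∧ G.lapMatrix ℝ *ᵥ y = lam • y ∧
        (∀ u ∉ S, y u = 0) ∧ (∀ u : ({v}ᶜ : Set V), y (u : V) = z u) := by
    intro z hz0 heig hsupp
    set y : V → ℝ := fun w => if h : w ∈ ({v}ᶜ : Set V) then z ⟨w, h⟩ else 0 with hydef
    have hcoe : ∀ u : ({v}ᶜ : Set V), y (u : V) = z u := by
      intro u; exact dif_pos u.2
    have hyv : y v = 0 := by simp [hydef]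
    have hsupp' : ∀ u ∉ S, y u = 0 := by
      intro u hu
      by_cases h : u = v
      · subst h; exact hyv
      · have hmem : u ∈ ({v}ᶜ : Set V) := by simp [h]
        rw [show u = ((⟨u, hmem⟩ : ({v}ᶜ : Set V)) : V) from rfl, hcoe]
        exact hsupp _ hu
    have hadj : ∀ u, G.Adj u v → y u = 0 := fun u hu =>
      hsupp' u (fun hs => hnadj u hs hu.symm)
    refine ⟨y, ?_, ?_, hsupp', hcoe⟩
    · intro h
      apply hz0
      funext u
      rw [← hcoe u, h]
      rfl
    · funext u
      by_cases hu : u = v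
      · subst hu
        rw [lap_apply_v G u y hyv (fun w hw => hadj w hw.symm)]
        simp [hyv]
      · have hmem : u ∈ ({v}ᶜ : Set V) := by simp [hu]
        have := lap_induce_eq G v y hyv hadj ⟨u, hmem⟩
        rw [show ((⟨u, hmem⟩ : ({v}ᶜ : Set V)) : V) = u from rfl] at this
        rw [← this]
        have : (fun w : ({v}ᶜ : Set V) => y ↑w) = z := funext hcoe
        rw [this, congrFun heig ⟨u, hmem⟩]
        simp [Pi.smul_apply, hcoe ⟨u, hmem⟩]
  constructor
  · constructor
    · rintro ⟨y, hy0, heig, hsupp⟩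
      obtain ⟨z, hz0, hzeig, hzy⟩ := fwd y hy0 heig hsupp
      exact ⟨z, hz0, hzeig, fun u hu => by rw [hzy u]; exact hsupp _ hu⟩
    · rintro ⟨z, hz0, heig, hsupp⟩
      obtain ⟨y, hy0, hyeig, hysupp, hcoe⟩ := bwd z hz0 heig hsupp
      exact ⟨y, hy0, hyeig, hysupp⟩
  · constructor
    · rintro ⟨y, hy0, heig, hsupp, hne⟩
      obtain ⟨z, hz0, hzeig, hzy⟩ := fwd y hy0 heig hsupp
      exact ⟨z, hz0, hzeig, fun u hu => by rw [hzy u]; exact hsupp _ hu,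
        fun u hu => by rw [hzy u]; exact hne _ hu⟩
    · rintro ⟨z, hz0, heig, hsupp, hne⟩
      obtain ⟨y, hy0, hyeig, hysupp, hcoe⟩ := bwd z hz0 heig hsupp
      refine ⟨y, hy0, hyeig, hysupp, fun u hu => ?_⟩
      have hmem : u ∈ ({v}ᶜ : Set V) := by
        simp only [Set.mem_compl_iff, Set.mem_singleton_iff]
        rintro rfl; exact hv hu
      rw [show u = ((⟨u, hmem⟩ : ({v}ᶜ : Set V)) : V) from rfl, hcoe]
      exact hne _ hu

end Aux

/-- Simplification step ②: if `v ∉ S` has no neighbor in `S`, then for each `λ` the Laplacian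
of `G` has a (nonzero) `λ`-eigenvector supported in `S` iff the Laplacian of `G - v` does;
the same holds for eigenvectors that are moreover nonzero on all of `S` (perfect case). -/

theorem critical_set_delete_nonneighbor
    {V : Type*} [Fintype V] [DecidableEq V]
    (G : SimpleGraph V) (S : Set V) (hSne : S.Nonempty)
    (v : V) (hv : v ∉ S) (hnadj : ∀ u ∈ S, ¬ G.Adj v u) (lam : ℝ) :
    ((∃ y : V → ℝ, y ≠ 0 ∧ G.lapMatrix ℝ *ᵥ y = lam • y ∧ ∀ u ∉ S, y u = 0) ↔
      (∃ z : ({v}ᶜ : Set V) → ℝ, z ≠ 0 ∧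
        (G.induce ({v}ᶜ : Set V)).lapMatrix ℝ *ᵥ z = lam • z ∧
        ∀ u : ({v}ᶜ : Set V), (u : V) ∉ S → z u = 0)) ∧
    ((∃ y : V → ℝ, y ≠ 0 ∧ G.lapMatrix ℝ *ᵥ y = lam • y ∧ (∀ u ∉ S, y u = 0) ∧
        ∀ u ∈ S, y u ≠ 0) ↔
      (∃ z : ({v}ᶜ : Set V) → ℝ, z ≠ 0 ∧
        (G.induce ({v}ᶜ : Set V)).lapMatrix ℝ *ᵥ z = lam • z ∧
        (∀ u : ({v}ᶜ : Set V), (u : V) ∉ S → z u = 0) ∧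
        ∀ u : ({v}ᶜ : Set V), (u : V) ∈ S → z u ≠ 0)) := by
  exact critical_set_delete_nonneighbor' G S hSne v hv hnadj lam
end

section
/- Let G be a finite simple undirected graph, S ⊆ V nonempty, and let v ∉ S be a vertex with N_S(v) = S (v is adjacent to every vertex of S). If y is a nonzero vector with L(G) y = λ y and y_u = 0 for all u ∉ S, then the restriction z of y to V∖{v} satisfies L(G−v) z = (λ−1) z and z ≠ 0 and z_u = 0 for all u ∈ (V∖{v})∖S. In particular, if S is a critical set of G with inducing eigenvalue λ, then S is a critical set of G − v with inducing eigenvalue λ − 1, and if the inducing eigenvector is perfect (nonzero on all of S), it remains perfect for G − v. -/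
open Matrix
open scoped Classical

/-- Simplification step ①: if `v ∉ S` is adjacent to every vertex of `S` and `y` is a nonzero
`λ`-eigenvector of the Laplacian of `G` supported in `S`, then the restriction `z` of `y` to
`V \ {v}` is a nonzero `(λ - 1)`-eigenvector of the Laplacian of `G - v` supported in `S`;
moreover if `y` is nonzero on all of `S`, so is `z`. -/
theorem critical_set_delete_full_neighbor
    {V : Type*} [Fintype V] [DecidableEq V]
    (G : SimpleGraph V) (S : Set V) (hSne : S.Nonempty)
    (v : V) (hv : v ∉ S) (hadj : ∀ u ∈ S, G.Adj v u) (lam : ℝ)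
    (y : V → ℝ) (hy0 : y ≠ 0) (heig : G.lapMatrix ℝ *ᵥ y = lam • y)
    (hout : ∀ u ∉ S, y u = 0) :
    (fun u : ({v}ᶜ : Set V) => y u) ≠ 0 ∧
    (G.induce ({v}ᶜ : Set V)).lapMatrix ℝ *ᵥ (fun u : ({v}ᶜ : Set V) => y u) =
      (lam - 1) • (fun u : ({v}ᶜ : Set V) => y u) ∧
    (∀ u : ({v}ᶜ : Set V), (u : V) ∉ S → y u = 0) ∧
    ((∀ u ∈ S, y u ≠ 0) → ∀ u : ({v}ᶜ : Set V), (u : V) ∈ S → y u ≠ 0) := by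
  have hyv : y v = 0 := hout v hv
  refine ⟨?_, ?_, fun u hu => hout u hu, fun h u hu => h u hu⟩
  · -- nonzero
    intro hzero
    apply hy0
    funext w
    by_cases hw : w = v
    · simpa [hw] using hyv
    · have : w ∈ ({v}ᶜ : Set V) := hw
      simpa using congrFun hzero ⟨w, this⟩
  · funext u
    obtain ⟨u, hu⟩ := u
    have huv : u ≠ v := hu
    -- image of induced neighbor finset
    have himg : ((G.induce ({v}ᶜ : Set V)).neighborFinset ⟨u, hu⟩).image
        (Subtype.val) = (G.neighborFinset u).erase v := by
      ext w
      simp only [Finset.mem_image, SimpleGraph.mem_neighborFinset, Finset.mem_erase,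
        SimpleGraph.comap_adj]
      constructor
      · rintro ⟨⟨w', hw'⟩, hadj', rfl⟩
        exact ⟨hw', hadj'⟩
      · rintro ⟨hwv, hadj'⟩
        exact ⟨⟨w, hwv⟩, hadj', rfl⟩
    have hsum : ∑ w ∈ (G.induce ({v}ᶜ : Set V)).neighborFinset ⟨u, hu⟩, y ↑w
        = ∑ w ∈ G.neighborFinset u, y w := by
      rw [← Finset.sum_image (f := y) (g := Subtype.val)
        (fun a _ b _ h => Subtype.ext h), himg]
      by_cases hvu : v ∈ G.neighborFinset u
      · rw [Finset.sum_erase_eq_sub hvu, hyv, sub_zero]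
      · rw [Finset.erase_eq_of_notMem hvu]
    have heigu : (G.degree u : ℝ) * y u - ∑ w ∈ G.neighborFinset u, y w = lam * y u := by
      have := congrFun heig u
      rwa [SimpleGraph.lapMatrix_mulVec_apply] at this
    rw [SimpleGraph.lapMatrix_mulVec_apply, hsum]
    show _ = (lam - 1) * y u
    by_cases hyu : y u = 0
    · rw [hyu, mul_zero, mul_zero, zero_sub] at heigu
      rw [hyu, mul_zero, mul_zero, zero_sub]
      exact heigu
    · have huS : u ∈ S := by by_contra hns; exact hyu (hout u hns)
      have hadjvu : G.Adj v u := hadj u huS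
      have hvmem : v ∈ G.neighborFinset u := by
        rw [SimpleGraph.mem_neighborFinset]; exact hadjvu.symm
      have hdeg : (G.induce ({v}ᶜ : Set V)).degree ⟨u, hu⟩ = G.degree u - 1 := by
        have := congrArg Finset.card himg
        rwa [Finset.card_image_of_injective _ Subtype.val_injective,
          Finset.card_erase_of_mem hvmem,
          SimpleGraph.card_neighborFinset_eq_degree,
          SimpleGraph.card_neighborFinset_eq_degree] at this
      have hdpos : 1 ≤ G.degree u := Finset.card_pos.mpr ⟨v, hvmem⟩
      have hcast : ((G.induce ({v}ᶜ : Set V)).degree ⟨u, hu⟩ : ℝ) = (G.degree u : ℝ) - 1 := by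
        rw [hdeg, Nat.cast_sub hdpos, Nat.cast_one]
      rw [hcast]
      have : ∑ w ∈ G.neighborFinset u, y w = (G.degree u : ℝ) * y u - lam * y u := by
        linarith
      rw [this]; ring
end
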